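/- arXiv:2003.13984 — 9 statements merged into one kernel-verified Lean document; each statement's English description precedes it below -/
import Mathlib

section
/- Let g : [0,∞) → ℝ be continuous, q₀ ∈ ℝ with q₀ ≠ 0, Z(t) = exp(−∫₀ᵗ g(s) ds), and let t* ∈ (0,∞] be the first time at which 1/q₀ + (1/2)∫₀ᵗ Z(s) ds vanishes (t* = ∞ if it never vanishes). Define Q(t) = Z(t)/(1/q₀ + (1/2)∫₀ᵗ Z(s) ds) and 𝔲(t) = Q(t) · exp( ∫₀ᵗ Q(s) ds + ∫₀ᵗ g(s) ds ) for t ∈ [0,t*). Then for every t ∈ [0,t*) one has exp(∫₀ᵗ Q(s) ds) = (1 + (1/2) q₀ ∫₀ᵗ Z(s) ds)² and 𝔲(t) = q₀ (1 + (1/2) q₀ ∫₀ᵗ Z(s) ds). In particular, if t* < ∞ then 𝔲(t) → 0 as t → t* from below. -/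
/-!
With `F t = 1/q₀ + (1/2) ∫₀ᵗ Z` one has `F' = Z/2`, so `Q = Z/F = 2 F'/F` is a logarithmic
derivative on `[0,t*)` and `exp ∫₀ᵗ Q = (F t / F 0)² = (q₀ F t)²`. Since `Z = exp(-∫₀ᵗ g)`,
the factor `exp ∫₀ᵗ g` cancels `Z` in `𝔲`, leaving `𝔲 = q₀² F`. When `t*` is finite it is the
first zero of the continuous function `F`, so `𝔲(t) → q₀² F(t*) = 0`.
-/

open MeasureTheory Real Set Filter Topology
open scoped ENNReal

theorem exp_integral_deriv_div_self {f f' : ℝ → ℝ} {a b : ℝ}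
    (hf : ∀ x ∈ uIcc a b, HasDerivAt f (f' x) x) (hf0 : ∀ x ∈ uIcc a b, f x ≠ 0)
    (hint : IntervalIntegrable (fun x => f' x / f x) volume a b) :
    exp (∫ x in a..b, f' x / f x) = |f b / f a| := by
  rw [intervalIntegral.integral_eq_sub_of_hasDerivAt (f := fun x => log (f x))
      (fun x hx => (hf x hx).log (hf0 x hx)) hint, exp_sub,
    exp_log_eq_abs (hf0 b right_mem_uIcc), exp_log_eq_abs (hf0 a left_mem_uIcc), abs_div]

theorem ENNReal.sInf_ofReal_image {S : Set ℝ} (hne : S.Nonempty)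
    (hbdd : BddBelow S) : sInf (ENNReal.ofReal '' S) = ENNReal.ofReal (sInf S) :=
  (Monotone.map_csInf_of_continuousAt ENNReal.continuous_ofReal.continuousAt
    ENNReal.ofReal_mono hne hbdd).symm

section Zeros

variable {F : ℝ → ℝ}

theorem ne_zero_of_ofReal_lt_sInf_zeros {s t : ℝ} (hs : s ∈ Icc 0 t)
    (ht : ENNReal.ofReal t < sInf (ENNReal.ofReal '' {t | 0 ≤ t ∧ F t = 0})) : F s ≠ 0 :=
  fun h => (ht.trans_le' (ENNReal.ofReal_le_ofReal hs.2)).not_ge (sInf_le ⟨s, ⟨hs.1, h⟩, rfl⟩)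

theorem exists_pos_zero_eq_sInf_ofReal_zeros (hF : Continuous F) (hF0 : F 0 ≠ 0)
    (h : sInf (ENNReal.ofReal '' {t | 0 ≤ t ∧ F t = 0}) ≠ ⊤) :
    ∃ a, 0 < a ∧ F a = 0 ∧
      sInf (ENNReal.ofReal '' {t | 0 ≤ t ∧ F t = 0}) = ENNReal.ofReal a := by
  set S := {t | 0 ≤ t ∧ F t = 0}
  have hne : S.Nonempty := nonempty_iff_ne_empty.2 fun hS => h (by simp [hS])
  have hclosed : IsClosed S := isClosed_Ici.inter (isClosed_eq hF continuous_const)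
  have hbdd : BddBelow S := ⟨0, fun _ hx => hx.1⟩
  obtain ⟨ha0, hFa⟩ : sInf S ∈ S := hclosed.csInf_mem hne hbdd
  exact ⟨sInf S, ha0.lt_of_ne fun ha => hF0 (ha ▸ hFa), hFa,
    ENNReal.sInf_ofReal_image hne hbdd⟩

end Zeros

noncomputable def breakingDenominator (q₀ : ℝ) (Z : ℝ → ℝ) (t : ℝ) : ℝ :=
  1 / q₀ + (1 / 2) * ∫ s in (0 : ℝ)..t, Z s

section BreakingDenominator

variable {q₀ : ℝ} {Z : ℝ → ℝ}

theorem hasDerivAt_breakingDenominator (hZ : Continuous Z) (t : ℝ) :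
    HasDerivAt (breakingDenominator q₀ Z) ((1 / 2) * Z t) t :=
  ((hZ.integral_hasStrictDerivAt 0 t).hasDerivAt.const_mul _).const_add _

theorem continuous_breakingDenominator (hZ : Continuous Z) :
    Continuous (breakingDenominator q₀ Z) :=
  continuous_iff_continuousAt.2 fun t => (hasDerivAt_breakingDenominator hZ t).continuousAt

theorem breakingDenominator_zero : breakingDenominator q₀ Z 0 = 1 / q₀ := by
  simp [breakingDenominator]

theorem mul_breakingDenominator (hq₀ : q₀ ≠ 0) (t : ℝ) :
    q₀ * breakingDenominator q₀ Z t = 1 + (1 / 2) * q₀ * ∫ s in (0 : ℝ)..t, Z s := by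
  simp only [breakingDenominator]
  field_simp

theorem exp_integral_eq_sq_mul_breakingDenominator (hZ : Continuous Z) (hq₀ : q₀ ≠ 0)
    {Q : ℝ → ℝ} {t : ℝ} (ht : 0 ≤ t) (hF : ∀ s ∈ Icc 0 t, breakingDenominator q₀ Z s ≠ 0)
    (hQ : ∀ s ∈ Icc 0 t, Q s = Z s / breakingDenominator q₀ Z s) :
    exp (∫ s in (0 : ℝ)..t, Q s) = (q₀ * breakingDenominator q₀ Z t) ^ 2 := by
  set F := breakingDenominator q₀ Z
  rw [← uIcc_of_le ht] at hF hQ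
  have hlog : exp (∫ s in (0 : ℝ)..t, (1 / 2) * Z s / F s) = |F t / F 0| :=
    exp_integral_deriv_div_self (fun s _ => hasDerivAt_breakingDenominator hZ s) hF
      ((continuous_const.mul hZ).continuousOn.div
        (continuous_breakingDenominator hZ).continuousOn hF).intervalIntegrable
  calc exp (∫ s in (0 : ℝ)..t, Q s)
      = exp (∫ s in (0 : ℝ)..t, (1 / 2) * Z s / F s) ^ 2 := by
        rw [← exp_nat_mul, ← intervalIntegral.integral_const_mul,
          intervalIntegral.integral_congr hQ]
        congr 2 with s
        ring
    _ = (q₀ * F t) ^ 2 := by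
        rw [hlog, sq_abs, show F 0 = 1 / q₀ from breakingDenominator_zero]
        field_simp

end BreakingDenominator

/-- With `Z(t) = exp(−∫₀ᵗ g)` and `t*` the first time (possibly `∞`)
at which the denominator `1/q₀ + (1/2)∫₀ᵗ Z` vanishes, the quantities
`Q(t) = Z(t)/(1/q₀ + (1/2)∫₀ᵗ Z)` and
`𝔲(t) = Q(t)·exp(∫₀ᵗ Q + ∫₀ᵗ g)` satisfy, on `[0,t*)`,
`exp(∫₀ᵗ Q) = (1 + (1/2) q₀ ∫₀ᵗ Z)²` and `𝔲(t) = q₀ (1 + (1/2) q₀ ∫₀ᵗ Z)`;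
in particular, if `t* < ∞` then `𝔲(t) → 0` as `t → t*⁻`. -/
theorem u_absolutely_continuous_at_wave_breaking
    (g : ℝ → ℝ) (hg : Continuous g)
    (q₀ : ℝ) (hq₀ : q₀ ≠ 0)
    (Z : ℝ → ℝ) (hZ : ∀ t, Z t = Real.exp (-∫ s in (0:ℝ)..t, g s))
    (tstar : ℝ≥0∞)
    (htstar : tstar =
      sInf (ENNReal.ofReal ''
        {t : ℝ | 0 ≤ t ∧ 1 / q₀ + (1/2) * ∫ s in (0:ℝ)..t, Z s = 0}))
    (Q : ℝ → ℝ)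
    (hQ : ∀ t : ℝ, 0 ≤ t → ENNReal.ofReal t < tstar →
      Q t = Z t / (1 / q₀ + (1/2) * ∫ s in (0:ℝ)..t, Z s))
    (u : ℝ → ℝ)
    (hu : ∀ t : ℝ, 0 ≤ t → ENNReal.ofReal t < tstar →
      u t = Q t * Real.exp ((∫ s in (0:ℝ)..t, Q s) + ∫ s in (0:ℝ)..t, g s)) :
    (∀ t : ℝ, 0 ≤ t → ENNReal.ofReal t < tstar →
      Real.exp (∫ s in (0:ℝ)..t, Q s)
          = (1 + (1/2) * q₀ * ∫ s in (0:ℝ)..t, Z s)^2 ∧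
      u t = q₀ * (1 + (1/2) * q₀ * ∫ s in (0:ℝ)..t, Z s)) ∧
    (tstar ≠ ⊤ →
      Filter.Tendsto u (nhdsWithin tstar.toReal (Set.Iio tstar.toReal))
        (nhds 0)) := by
  have hZc : Continuous Z :=
    funext hZ ▸ (intervalIntegral.continuous_primitive hg.intervalIntegrable 0).neg.rexp
  set F := breakingDenominator q₀ Z
  replace htstar : tstar = sInf (ENNReal.ofReal '' {t | 0 ≤ t ∧ F t = 0}) := htstar
  replace hQ : ∀ t, 0 ≤ t → ENNReal.ofReal t < tstar → Q t = Z t / F t := hQ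
  have key : ∀ t, 0 ≤ t → ENNReal.ofReal t < tstar →
      exp (∫ s in (0 : ℝ)..t, Q s) = (q₀ * F t) ^ 2 ∧ u t = q₀ * (q₀ * F t) := by
    intro t ht htt
    have hF : ∀ s ∈ Icc 0 t, F s ≠ 0 := fun s hs =>
      ne_zero_of_ofReal_lt_sInf_zeros hs (htstar ▸ htt)
    have hexp : exp (∫ s in (0 : ℝ)..t, Q s) = (q₀ * F t) ^ 2 :=
      exp_integral_eq_sq_mul_breakingDenominator hZc hq₀ ht hF fun s hs =>
        hQ s hs.1 ((ENNReal.ofReal_le_ofReal hs.2).trans_lt htt)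
    refine ⟨hexp, ?_⟩
    rw [hu t ht htt, exp_add, hexp, hQ t ht htt, hZ t, exp_neg]
    field_simp [hF t ⟨ht, le_rfl⟩]
  refine ⟨fun t ht htt => mul_breakingDenominator (Z := Z) hq₀ t ▸ key t ht htt, fun htop => ?_⟩
  have hFc : Continuous F := continuous_breakingDenominator hZc
  obtain ⟨a, ha0, hFa, hta⟩ := exists_pos_zero_eq_sInf_ofReal_zeros hFc
    ((show F 0 = 1 / q₀ from breakingDenominator_zero) ▸ one_div_ne_zero hq₀) (htstar ▸ htop)
  rw [htstar, hta, ENNReal.toReal_ofReal ha0.le]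
  have hlim := ((hFc.tendsto a).const_mul q₀).const_mul q₀
  rw [show F a = 0 from hFa, mul_zero, mul_zero] at hlim
  refine (hlim.mono_left nhdsWithin_le_nhds).congr' ?_
  filter_upwards [Ioo_mem_nhdsLT ha0] with t ht
  have htt : ENNReal.ofReal t < tstar := htstar ▸ hta ▸ (ENNReal.ofReal_lt_ofReal_iff ha0).2 ht.2
  exact (key t ht.1.le htt).2.symm
end

section
/- Let g : [0,∞) → ℝ be continuous with ∫₀ᵗ g denoted G(t), let q₀ < 0, Z(t) = exp(−G(t)), let t* ∈ (0,∞) satisfy −(1/2) q₀ ∫₀^{t*} Z(s) ds = 1, and let Q(t) = Z(t)/(1/q₀ + (1/2)∫₀ᵗ Z(s) ds) on [0,t*). Suppose D : [0,t*) → ℝ is differentiable with D(0) = d₀ and D′(t) = (Q(t) + g(t)) D(t) for all t ∈ [0,t*). Then D(t) = d₀ · (1 + (1/2) q₀ ∫₀ᵗ Z(s) ds)² · exp(G(t)) for every t ∈ [0,t*); consequently, if d₀ ≠ 0 then D(t) ≠ 0 for every t ∈ [0,t*), and D(t) → 0 as t → t* from below. In other words, the difference of two characteristics vanishes for the first time exactly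 at the wave-breaking time t*. -/
/-!
Writing `P t = 1 + (1/2) q₀ ∫₀ᵗ Z`, one has `P' = (1/2) q₀ Z` and `Q = q₀ Z / P`, so `P²` solves
`y' = Q y` and `E = P² exp G` solves the same linear equation `y' = (Q + g) y` as `D`, with
`E 0 = 1`. Since `q₀ < 0` and `Z > 0`, `P` decreases strictly to `P t* = 0`, so `E` does not
vanish on `[0, t*)` and `D / E` is constant there. Hence `D = d₀ E`, which is nonzero before `t*`
and tends to `d₀ E t* = 0`.
-/

open MeasureTheory Real Set Filter Topology

theorem mul_eq_mul_of_hasDerivAt_eq_mul_self {k f E : ℝ → ℝ} {a b : ℝ}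
    (hf : ∀ t ∈ Ico a b, HasDerivAt f (k t * f t) t)
    (hE : ∀ t ∈ Ico a b, HasDerivAt E (k t * E t) t)
    (hE0 : ∀ t ∈ Ico a b, E t ≠ 0) :
    ∀ t ∈ Ico a b, f t * E a = f a * E t := by
  intro t ht
  have ha : a ∈ Ico a b := ⟨le_rfl, ht.1.trans_lt ht.2⟩
  have hsub : Icc a t ⊆ Ico a b := fun x hx => ⟨hx.1, hx.2.trans_lt ht.2⟩
  have hquot : ∀ x ∈ Ico a b, HasDerivAt (fun s => f s / E s) 0 x := by
    intro x hx
    refine ((hf x hx).div (hE x hx) (hE0 x hx)).congr_deriv ?_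
    ring
  have hconst := constant_of_has_deriv_right_zero (f := fun s => f s / E s)
    (fun x hx => (hquot x (hsub hx)).continuousAt.continuousWithinAt)
    (fun x hx => (hquot x (hsub (Ico_subset_Icc_self hx))).hasDerivWithinAt)
    t (right_mem_Icc.2 ht.1)
  have hEt := hE0 t ht
  have hEa := hE0 a ha
  field_simp at hconst
  linarith

/-- At a zero of `1 + (1/2) q I t` both sides vanish, the left one since `z / 0 = 0`. -/
theorem hasDerivAt_sq_mul_exp {I G : ℝ → ℝ} {z γ q t : ℝ} (hq : q ≠ 0)
    (hI : HasDerivAt I z t) (hG : HasDerivAt G γ t) :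
    HasDerivAt (fun s => (1 + (1/2) * q * I s) ^ 2 * exp (G s))
      ((z / (1 / q + (1/2) * I t) + γ) * ((1 + (1/2) * q * I t) ^ 2 * exp (G t))) t := by
  have hP : HasDerivAt (fun s => 1 + (1/2) * q * I s) ((1/2) * q * z) t :=
    (hI.const_mul _).const_add 1
  refine ((hP.pow 2).mul hG.exp).congr_deriv ?_
  have hden : 1 / q + (1/2) * I t = (1 + (1/2) * q * I t) / q := by field_simp
  simp only [Pi.pow_apply, hden]
  generalize 1 + (1/2) * q * I t = P
  rcases eq_or_ne P 0 with rfl | hP0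
  · simp
  · field_simp
    ring

theorem strictMono_integral_of_pos {Z : ℝ → ℝ} (hZ : Continuous Z) (hpos : ∀ t, 0 < Z t)
    (a : ℝ) : StrictMono fun t => ∫ s in a..t, Z s := by
  intro t u htu
  dsimp only
  have := intervalIntegral.intervalIntegral_pos_of_pos_on
    (hZ.intervalIntegrable t u) (fun x _ => hpos x) htu
  rw [← intervalIntegral.integral_add_adjacent_intervals (hZ.intervalIntegrable a t)
    (hZ.intervalIntegrable t u)]
  linarith

/-- The difference of two characteristics for box data satisfies the
linear equation `D′ = (Q + g)D`; hence `D(t) = d₀ (1 + (1/2) q₀ ∫₀ᵗ Z)² exp(G(t))`,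
so that (for `d₀ ≠ 0`) `D` does not vanish before the wave-breaking time `t*` and
tends to `0` as `t → t*⁻`: characteristics meet exactly at wave-breaking. -/
theorem characteristics_meet_at_wave_breaking
    (g : ℝ → ℝ) (hg : Continuous g)
    (G : ℝ → ℝ) (hG : ∀ t, G t = ∫ s in (0:ℝ)..t, g s)
    (q₀ : ℝ) (hq₀ : q₀ < 0)
    (Z : ℝ → ℝ) (hZ : ∀ t, Z t = Real.exp (-G t))
    (tstar : ℝ) (htstar : 0 < tstar)
    (heq : -(1/2) * q₀ * ∫ s in (0:ℝ)..tstar, Z s = 1)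
    (Q : ℝ → ℝ)
    (hQ : ∀ t ∈ Set.Ico (0:ℝ) tstar,
      Q t = Z t / (1 / q₀ + (1/2) * ∫ s in (0:ℝ)..t, Z s))
    (D : ℝ → ℝ) (d₀ : ℝ) (hD0 : D 0 = d₀)
    (hD : ∀ t ∈ Set.Ico (0:ℝ) tstar, HasDerivAt D ((Q t + g t) * D t) t) :
    (∀ t ∈ Set.Ico (0:ℝ) tstar,
      D t = d₀ * (1 + (1/2) * q₀ * ∫ s in (0:ℝ)..t, Z s)^2 * Real.exp (G t)) ∧
    (d₀ ≠ 0 →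
      (∀ t ∈ Set.Ico (0:ℝ) tstar, D t ≠ 0) ∧
      Filter.Tendsto D (nhdsWithin tstar (Set.Iio tstar)) (nhds 0)) := by
  have hGd : ∀ t, HasDerivAt G (g t) t := fun t => by
    rw [funext hG]; exact (hg.integral_hasStrictDerivAt 0 t).hasDerivAt
  have hGcont : Continuous G := continuous_iff_continuousAt.2 fun t => (hGd t).continuousAt
  have hZcont : Continuous Z := by
    rw [funext hZ]; exact hGcont.neg.rexp
  have hZpos : ∀ t, 0 < Z t := fun t => hZ t ▸ exp_pos _
  set I : ℝ → ℝ := fun t => ∫ s in (0:ℝ)..t, Z s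
  set E : ℝ → ℝ := fun t => (1 + (1/2) * q₀ * I t) ^ 2 * exp (G t)
  have hEcont : Continuous E := by
    have : Continuous I :=
      intervalIntegral.continuous_primitive (fun _ _ => hZcont.intervalIntegrable _ _) 0
    fun_prop
  have hPpos : ∀ t ∈ Ico 0 tstar, 0 < 1 + (1/2) * q₀ * I t := fun t ht => by
    have := strictMono_integral_of_pos hZcont hZpos 0 ht.2
    nlinarith
  have hEpos : ∀ t ∈ Ico 0 tstar, 0 < E t := fun t ht =>
    mul_pos (pow_pos (hPpos t ht) 2) (exp_pos _)
  have hEd : ∀ t ∈ Ico 0 tstar, HasDerivAt E ((Q t + g t) * E t) t := fun t ht => by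
    rw [hQ t ht]
    exact hasDerivAt_sq_mul_exp hq₀.ne (hZcont.integral_hasStrictDerivAt 0 t).hasDerivAt (hGd t)
  have hE0 : E 0 = 1 := by simp [E, I, hG]
  have hDE : ∀ t ∈ Ico 0 tstar, D t = d₀ * E t := fun t ht => by
    simpa [hE0, hD0] using mul_eq_mul_of_hasDerivAt_eq_mul_self hD hEd
      (fun s hs => (hEpos s hs).ne') t ht
  have hEtstar : E tstar = 0 := by simp [E, I]; linarith
  refine ⟨fun t ht => by rw [hDE t ht, mul_assoc], fun hd₀ => ⟨fun t ht => ?_, ?_⟩⟩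
  · rw [hDE t ht]
    exact mul_ne_zero hd₀ (hEpos t ht).ne'
  · have hlim : Tendsto (fun t => d₀ * E t) (𝓝[<] tstar) (𝓝 0) := by
      simpa [hEtstar] using ((hEcont.const_mul d₀).tendsto tstar).mono_left nhdsWithin_le_nhds
    exact hlim.congr' (eventuallyEq_of_mem (Ico_mem_nhdsLT htstar) fun t ht => (hDE t ht).symm)
end

section
/- Let W be a standard one-dimensional Brownian motion on a probability space (Ω, ℱ, P), let c ≠ 0 be a real constant, and let v < 0. Define the random time t*(ω) = inf{ t ≥ 0 : −(v/2) ∫₀ᵗ exp(−c W_s(ω)) ds ≥ 1 } (with t* = ∞ if the set is empty). Then for every t ≥ 0, P( t* ≥ t ) = P( ∫₀^{c² t / 4} exp(2 W_s) ds ≤ −c² / (2 v) ). -/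
/-!
Along a path, `τ ↦ -(v/2) ∫₀^τ exp(-c W_s) ds` is continuous, strictly increasing and vanishes
at `0`, so `t ≤ t*` exactly when its value at `t` is at most `1`. The substitution `s = 4u/c²`
turns that value into `(-2v/c²) ∫₀^{c²t/4} exp(2 B_u) du` with `B_u = -(c/2) W_{4u/c²}`, again a
standard Brownian motion by scaling. For continuous `F`, the law of `∫₀^T F(X_s) ds` is the same
for every standard Brownian motion `X`: it is the limit in distribution of left Riemann sums, whose
laws depend only on the Gaussian independent increments.
-/

open MeasureTheory ProbabilityTheory Real Set
open scoped ENNReal NNReal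

/-- A standard one-dimensional Brownian motion on a probability space: starts at `0`,
has continuous sample paths, Gaussian increments `W_t − W_s ~ N(0, t−s)` for
`0 ≤ s ≤ t`, and independent increments over any finite increasing sequence of
nonnegative times. -/
structure IsStandardBrownianMotion {Ω : Type*} [MeasurableSpace Ω]
    (P : Measure Ω) (W : ℝ → Ω → ℝ) : Prop where
  isProbability : IsProbabilityMeasure P
  measurable : ∀ t : ℝ, Measurable (W t)
  init : ∀ ω, W 0 ω = 0
  cont : ∀ ω, Continuous fun t => W t ω
  gauss_incr : ∀ s t : ℝ, 0 ≤ s → s ≤ t →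
    Measure.map (fun ω => W t ω - W s ω) P = gaussianReal 0 (Real.toNNReal (t - s))
  indep_incr : ∀ (n : ℕ) (t : Fin (n + 1) → ℝ), (∀ i, 0 ≤ t i) → Monotone t →
    iIndepFun
      (fun (i : Fin n) ω => W (t i.succ) ω - W (t i.castSucc) ω) P

open Filter Topology

theorem ofReal_le_sInf_hittingTime_iff {F : ℝ → ℝ} (hF : Continuous F) (hFm : StrictMono F)
    {a t : ℝ} (h0 : F 0 ≤ a) (ht : 0 ≤ t) :
    ENNReal.ofReal t ≤ sInf (ENNReal.ofReal '' {s | 0 ≤ s ∧ a ≤ F s}) ↔ F t ≤ a := by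
  constructor
  · intro h
    by_contra! hlt
    obtain ⟨s, ⟨hs0, hst⟩, hFs⟩ := intermediate_value_Icc ht hF.continuousOn ⟨h0, hlt.le⟩
    have hst' : s < t := lt_of_le_of_ne hst (by rintro rfl; exact hlt.ne' hFs)
    have := h.trans (sInf_le ⟨s, ⟨hs0, hFs.ge⟩, rfl⟩)
    exact absurd this (not_le.2 ((ENNReal.ofReal_lt_ofReal_iff (hs0.trans_lt hst')).2 hst'))
  · refine fun h => le_sInf ?_
    rintro _ ⟨s, ⟨-, hs⟩, rfl⟩
    exact ENNReal.ofReal_le_ofReal (hFm.le_iff_le.1 (h.trans hs))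

theorem strictMono_intervalIntegral_of_pos {f : ℝ → ℝ} (hf : Continuous f) (hpos : ∀ x, 0 < f x)
    (a : ℝ) : StrictMono fun x => ∫ s in a..x, f s := by
  intro x y hxy
  have hsplit := intervalIntegral.integral_add_adjacent_intervals
    (hf.intervalIntegrable (μ := volume) a x) (hf.intervalIntegrable x y)
  have := intervalIntegral.intervalIntegral_pos_of_pos (hf.intervalIntegrable x y) hpos hxy
  show ∫ s in a..x, f s < ∫ s in a..y, f s
  linarith

theorem norm_mul_sub_intervalIntegral_le {g : ℝ → ℝ} {a b ε : ℝ}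
    (hg : IntervalIntegrable g volume a b) (hab : a ≤ b) (h : ∀ x ∈ Ioc a b, ‖g a - g x‖ ≤ ε) :
    ‖(b - a) * g a - ∫ x in a..b, g x‖ ≤ ε * (b - a) := by
  have hconst : (b - a) * g a = ∫ _ in a..b, g a := by simp
  rw [hconst, ← intervalIntegral.integral_sub intervalIntegrable_const hg,
    ← abs_of_nonneg (sub_nonneg.2 hab)]
  exact intervalIntegral.norm_integral_le_of_norm_le_const (by rwa [uIoc_of_le hab])

noncomputable def leftRiemannSum (g : ℝ → ℝ) (T : ℝ) (n : ℕ) : ℝ :=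
  ∑ k ∈ Finset.range n, T / n * g (k * T / n)

theorem tendsto_leftRiemannSum {g : ℝ → ℝ} (hg : Continuous g) {T : ℝ} (hT : 0 ≤ T) :
    Tendsto (leftRiemannSum g T) atTop (𝓝 (∫ s in (0:ℝ)..T, g s)) := by
  rw [Metric.tendsto_atTop]
  intro ε hε
  obtain ⟨δ, hδ, hgδ⟩ := Metric.uniformContinuousOn_iff.1
    ((isCompact_Icc (a := 0) (b := T)).uniformContinuousOn_of_continuous hg.continuousOn)
    (ε / (T + 1)) (by positivity)
  obtain ⟨N, hN⟩ := exists_nat_gt (T / δ)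
  refine ⟨N + 1, fun n hn => ?_⟩
  have hn : (0 : ℝ) < n := by norm_cast; omega
  have hNn : (N : ℝ) < n := by norm_cast
  set a : ℕ → ℝ := fun k => k * T / n with ha
  have hstep : ∀ k, a (k + 1) - a k = T / n := fun k => by simp only [ha]; push_cast; ring
  have hmesh : T / n < δ := by
    have := (div_lt_iff₀ hδ).1 hN
    rw [div_lt_iff₀ hn]; nlinarith
  have ha_mem : ∀ k ≤ n, a k ∈ Icc 0 T := fun k hk => by
    have : (k : ℝ) ≤ n := by exact_mod_cast hk
    exact ⟨by positivity, by rw [ha, div_le_iff₀ hn]; nlinarith⟩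
  have hsum : ∫ s in (0:ℝ)..T, g s = ∑ k ∈ Finset.range n, ∫ s in a k..a (k + 1), g s := by
    rw [intervalIntegral.sum_integral_adjacent_intervals fun k _ => hg.intervalIntegrable _ _]
    simp [ha, hn.ne']
  have hterm : ∀ k ∈ Finset.range n,
      ‖T / n * g (k * T / n) - ∫ s in a k..a (k + 1), g s‖ ≤ ε / (T + 1) * (T / n) := by
    intro k hk
    have hk := Finset.mem_range.1 hk
    have hle : a k ≤ a (k + 1) := by linarith [hstep k, div_nonneg hT hn.le]
    rw [← hstep k]
    refine norm_mul_sub_intervalIntegral_le (hg.intervalIntegrable _ _) hle fun x hx => ?_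
    have hxT : x ∈ Icc 0 T :=
      ⟨(ha_mem k hk.le).1.trans hx.1.le, hx.2.trans (ha_mem (k + 1) hk).2⟩
    have hdist : dist (a k) x < δ := by
      rw [dist_comm, Real.dist_eq, abs_of_pos (sub_pos.2 hx.1)]; linarith [hx.2, hstep k]
    exact (hgδ _ (ha_mem k hk.le) x hxT hdist).le
  calc dist (leftRiemannSum g T n) (∫ s in (0:ℝ)..T, g s)
      = ‖∑ k ∈ Finset.range n, (T / n * g (k * T / n) - ∫ s in a k..a (k + 1), g s)‖ := by
        rw [dist_eq_norm, hsum, leftRiemannSum, Finset.sum_sub_distrib]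
    _ ≤ ∑ _k ∈ Finset.range n, ε / (T + 1) * (T / n) := norm_sum_le_of_le _ hterm
    _ = ε * (T / (T + 1)) := by rw [Finset.sum_const, Finset.card_range, nsmul_eq_mul]; field_simp
    _ < ε := mul_lt_of_lt_one_right hε ((div_lt_one (by linarith)).2 (by linarith))

theorem map_eq_of_tendsto_of_map_eq {ι Ω Ω' E : Type*} {l : Filter ι} [l.IsCountablyGenerated]
    [l.NeBot] [MeasurableSpace Ω] [MeasurableSpace Ω'] [PseudoEMetricSpace E] [MeasurableSpace E]
    [BorelSpace E] {P : Measure Ω} {Q : Measure Ω'} [IsProbabilityMeasure P]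
    [IsProbabilityMeasure Q] {X : ι → Ω → E} {Y : ι → Ω' → E} {J : Ω → E} {J' : Ω' → E}
    (hX : ∀ i, AEMeasurable (X i) P) (hY : ∀ i, AEMeasurable (Y i) Q)
    (hJ : AEMeasurable J P) (hJ' : AEMeasurable J' Q)
    (hXJ : ∀ᵐ ω ∂P, Tendsto (X · ω) l (𝓝 (J ω))) (hYJ' : ∀ᵐ ω ∂Q, Tendsto (Y · ω) l (𝓝 (J' ω)))
    (hXY : ∀ i, P.map (X i) = Q.map (Y i)) :
    P.map J = Q.map J' := by
  have h := tendstoInDistribution_of_ae_tendsto hX hJ hXJ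
  have h' := tendstoInDistribution_of_ae_tendsto hY hJ' hYJ'
  have hlaw : (fun i => (⟨P.map (X i), Measure.isProbabilityMeasure_map (hX i)⟩ :
      ProbabilityMeasure E)) = fun i => ⟨Q.map (Y i), Measure.isProbabilityMeasure_map (hY i)⟩ :=
    funext fun i => Subtype.ext (hXY i)
  have := tendsto_nhds_unique h.tendsto (hlaw ▸ h'.tendsto)
  exact congrArg Subtype.val this

theorem Fin.measurable_partialSum {M : Type*} [AddMonoid M] [MeasurableSpace M]
    [MeasurableAdd₂ M] {n : ℕ} : Measurable (Fin.partialSum : (Fin n → M) → _) := by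
  refine measurable_pi_lambda _ fun i => Fin.inductionOn i (by simp) fun i hi => ?_
  simp_rw [Fin.partialSum_succ]
  exact hi.add (measurable_pi_apply i)

namespace IsStandardBrownianMotion

variable {Ω Ω' : Type*} [MeasurableSpace Ω] [MeasurableSpace Ω'] {P : Measure Ω} {Q : Measure Ω'}
  {W X : ℝ → Ω → ℝ} {Y : ℝ → Ω' → ℝ} {F : ℝ → ℝ} {T : ℝ}

theorem rescale (hW : IsStandardBrownianMotion P W) {a : ℝ} (ha : a ≠ 0) :
    IsStandardBrownianMotion P fun t ω => a⁻¹ * W (a ^ 2 * t) ω where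
  isProbability := hW.isProbability
  measurable t := (hW.measurable _).const_mul _
  init ω := by simp [hW.init ω]
  cont ω := continuous_const.mul ((hW.cont ω).comp (continuous_const.mul continuous_id))
  gauss_incr s t hs hst := by
    have hincr : (fun ω => a⁻¹ * W (a ^ 2 * t) ω - a⁻¹ * W (a ^ 2 * s) ω)
        = (a⁻¹ * ·) ∘ fun ω => W (a ^ 2 * t) ω - W (a ^ 2 * s) ω := by
      funext ω; simp [mul_sub]
    have hm : Measurable fun ω => W (a ^ 2 * t) ω - W (a ^ 2 * s) ω :=
      (hW.measurable _).sub (hW.measurable _)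
    rw [hincr, ← Measure.map_map (measurable_const_mul _) hm,
      hW.gauss_incr _ _ (by positivity) (by gcongr), gaussianReal_map_const_mul, mul_zero]
    congr 1
    ext
    have ha2 : 0 < a ^ 2 := by positivity
    simp only [NNReal.coe_mul, NNReal.coe_mk, Real.coe_toNNReal _ (sub_nonneg.2 hst),
      Real.coe_toNNReal _ (sub_nonneg.2 (mul_le_mul_of_nonneg_left hst ha2.le))]
    field_simp
  indep_incr n τ hτ0 hτm := by
    have h := (hW.indep_incr n (fun i => a ^ 2 * τ i) (fun i => by have := hτ0 i; positivity)
      fun i j hij => mul_le_mul_of_nonneg_left (hτm hij) (sq_nonneg a)).comp (fun _ x => a⁻¹ * x)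
      fun _ => measurable_const_mul _
    convert h using 2 with i
    funext ω
    simp [mul_sub]

theorem map_increments (hW : IsStandardBrownianMotion P W) {n : ℕ} {t : Fin (n + 1) → ℝ}
    (ht0 : ∀ i, 0 ≤ t i) (ht : Monotone t) :
    P.map (fun ω (i : Fin n) => W (t i.succ) ω - W (t i.castSucc) ω)
      = Measure.pi fun i : Fin n => gaussianReal 0 (t i.succ - t i.castSucc).toNNReal := by
  have hm : ∀ i : Fin n, AEMeasurable (fun ω => W (t i.succ) ω - W (t i.castSucc) ω) P :=
    fun i => ((hW.measurable _).sub (hW.measurable _)).aemeasurable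
  rw [(hW.indep_incr n t ht0 ht).map_fun_eq_pi_map hm]
  congr with i : 1
  exact hW.gauss_incr _ _ (ht0 _) (ht (Fin.castSucc_le_succ i))

theorem map_fdd (hW : IsStandardBrownianMotion P W) {n : ℕ} {t : Fin (n + 1) → ℝ}
    (ht0 : t 0 = 0) (ht : Monotone t) :
    P.map (fun ω i => W (t i) ω)
      = (Measure.pi fun i : Fin n => gaussianReal 0 (t i.succ - t i.castSucc).toNNReal).map
          Fin.partialSum := by
  have hnonneg : ∀ i, 0 ≤ t i := fun i => ht0 ▸ ht (Fin.zero_le i)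
  have htel : (fun ω i => W (t i) ω)
      = Fin.partialSum ∘ fun ω (i : Fin n) => W (t i.succ) ω - W (t i.castSucc) ω := by
    funext ω
    have := Fin.partialSum_left_neg fun i => W (t i) ω
    simp only [ht0, hW.init, zero_vadd, neg_add_eq_sub] at this
    exact this.symm
  have hm : Measurable fun ω (i : Fin n) => W (t i.succ) ω - W (t i.castSucc) ω :=
    measurable_pi_lambda _ fun i => (hW.measurable _).sub (hW.measurable _)
  rw [htel, ← Measure.map_map Fin.measurable_partialSum hm, hW.map_increments hnonneg ht]

theorem map_fdd_eq (hX : IsStandardBrownianMotion P X) (hY : IsStandardBrownianMotion Q Y)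
    {n : ℕ} {t : Fin (n + 1) → ℝ} (ht0 : t 0 = 0) (ht : Monotone t) :
    P.map (fun ω i => X (t i) ω) = Q.map (fun ω i => Y (t i) ω) := by
  rw [hX.map_fdd ht0 ht, hY.map_fdd ht0 ht]

theorem measurable_leftRiemannSum (hW : IsStandardBrownianMotion P W) (hF : Measurable F)
    (T : ℝ) (n : ℕ) : Measurable fun ω => leftRiemannSum (fun s => F (W s ω)) T n :=
  Finset.measurable_sum _ fun _ _ => measurable_const.mul (hF.comp (hW.measurable _))

theorem measurable_intervalIntegral (hW : IsStandardBrownianMotion P W) (hF : Continuous F)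
    (hT : 0 ≤ T) : Measurable fun ω => ∫ s in (0:ℝ)..T, F (W s ω) :=
  measurable_of_tendsto_metrizable (hW.measurable_leftRiemannSum hF.measurable T)
    (tendsto_pi_nhds.2 fun ω => tendsto_leftRiemannSum (hF.comp (hW.cont ω)) hT)

theorem map_leftRiemannSum_eq (hX : IsStandardBrownianMotion P X)
    (hY : IsStandardBrownianMotion Q Y) (hF : Measurable F) (hT : 0 ≤ T) (n : ℕ) :
    P.map (fun ω => leftRiemannSum (fun s => F (X s ω)) T n)
      = Q.map (fun ω => leftRiemannSum (fun s => F (Y s ω)) T n) := by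
  let t : Fin (n + 1) → ℝ := fun i => i * T / n
  have ht : Monotone t := fun i j hij => by
    simp only [t]; gcongr; exact_mod_cast hij
  let G : (Fin (n + 1) → ℝ) → ℝ := fun y => ∑ i : Fin n, T / n * F (y i.castSucc)
  have hG : Measurable G :=
    Finset.measurable_sum _ fun i _ => measurable_const.mul (hF.comp (measurable_pi_apply _))
  have hsum : ∀ w : ℝ → ℝ, leftRiemannSum (fun s => F (w s)) T n = G fun i => w (t i) := by
    intro w
    simp [leftRiemannSum, Finset.sum_range, G, t]
  simp_rw [hsum]
  change P.map (G ∘ fun ω i => X (t i) ω) = Q.map (G ∘ fun ω i => Y (t i) ω)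
  rw [← Measure.map_map (g := G) hG (measurable_pi_lambda _ fun i => hX.measurable _),
    ← Measure.map_map (g := G) hG (measurable_pi_lambda _ fun i => hY.measurable _),
    hX.map_fdd_eq hY (by simp [t]) ht]

theorem map_intervalIntegral_eq (hX : IsStandardBrownianMotion P X)
    (hY : IsStandardBrownianMotion Q Y) (hF : Continuous F) (hT : 0 ≤ T) :
    P.map (fun ω => ∫ s in (0:ℝ)..T, F (X s ω))
      = Q.map (fun ω => ∫ s in (0:ℝ)..T, F (Y s ω)) :=
  haveI := hX.isProbability
  haveI := hY.isProbability
  map_eq_of_tendsto_of_map_eq (l := atTop)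
    (fun n => (hX.measurable_leftRiemannSum hF.measurable T n).aemeasurable)
    (fun n => (hY.measurable_leftRiemannSum hF.measurable T n).aemeasurable)
    (hX.measurable_intervalIntegral hF hT).aemeasurable
    (hY.measurable_intervalIntegral hF hT).aemeasurable
    (ae_of_all _ fun ω => tendsto_leftRiemannSum (hF.comp (hX.cont ω)) hT)
    (ae_of_all _ fun ω => tendsto_leftRiemannSum (hF.comp (hY.cont ω)) hT)
    (hX.map_leftRiemannSum_eq hY hF.measurable hT)

end IsStandardBrownianMotion

noncomputable def waveBreakingTime (c v : ℝ) (w : ℝ → ℝ) : ℝ≥0∞ :=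
  sInf (ENNReal.ofReal '' {t : ℝ | 0 ≤ t ∧ 1 ≤ -(v / 2) * ∫ s in (0:ℝ)..t, exp (-(c * w s))})

theorem integral_exp_rescale (w : ℝ → ℝ) {c : ℝ} (hc : c ≠ 0) (t : ℝ) :
    ∫ u in (0:ℝ)..c ^ 2 * t / 4, exp (2 * ((-2 / c)⁻¹ * w ((-2 / c) ^ 2 * u)))
      = ((-2 / c) ^ 2)⁻¹ * ∫ s in (0:ℝ)..t, exp (-(c * w s)) := by
  have h := intervalIntegral.integral_comp_mul_left (fun s => exp (-(c * w s)))
    (a := 0) (b := c ^ 2 * t / 4) (pow_ne_zero 2 (div_ne_zero (by norm_num : (-2 : ℝ) ≠ 0) hc))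
  rw [mul_zero, show (-2 / c) ^ 2 * (c ^ 2 * t / 4) = t by field_simp; ring, smul_eq_mul] at h
  have hcoef : 2 * (-2 / c)⁻¹ = -c := by field_simp
  simp only [← mul_assoc, hcoef, neg_mul, ← h]

theorem ofReal_le_waveBreakingTime_iff {w : ℝ → ℝ} (hw : Continuous w) {c v t : ℝ} (hc : c ≠ 0)
    (hv : v < 0) (ht : 0 ≤ t) :
    ENNReal.ofReal t ≤ waveBreakingTime c v w
      ↔ ∫ u in (0:ℝ)..c ^ 2 * t / 4, exp (2 * ((-2 / c)⁻¹ * w ((-2 / c) ^ 2 * u)))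
          ≤ -c ^ 2 / (2 * v) := by
  have hexp : Continuous fun s => exp (-(c * w s)) :=
    continuous_exp.comp (continuous_const.mul hw).neg
  have hmono := strictMono_intervalIntegral_of_pos hexp (fun _ => exp_pos _) 0
  have hv2 : 0 < -(v / 2) := by linarith
  have hK : -c ^ 2 / (2 * v) = ((-2 / c) ^ 2)⁻¹ * (1 / -(v / 2)) := by field_simp
  rw [waveBreakingTime, ofReal_le_sInf_hittingTime_iff
    (F := fun τ => -(v / 2) * ∫ s in (0:ℝ)..τ, exp (-(c * w s)))
    (continuous_const.mul (intervalIntegral.continuous_primitive hexp.intervalIntegrable 0))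
    (fun x y hxy => mul_lt_mul_of_pos_left (hmono hxy) hv2) (by simp) ht,
    integral_exp_rescale w hc, hK, mul_le_mul_iff_right₀ (by positivity), le_div_iff₀ hv2,
    mul_comm]

/-- The law of the wave-breaking time: with `t*` the hitting time of
level `1` by the increasing process `−(v/2)∫₀ᵗ exp(−c W_s) ds` (`v < 0`, `c ≠ 0`),
one has `P(t* ≥ t) = P(∫₀^{c²t/4} exp(2 W_s) ds ≤ −c²/(2v))`. -/
theorem law_of_wave_breaking_time
    {Ω : Type*} [MeasurableSpace Ω] (P : Measure Ω) (W : ℝ → Ω → ℝ)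
    (hW : IsStandardBrownianMotion P W)
    (c : ℝ) (hc : c ≠ 0) (v : ℝ) (hv : v < 0)
    (tstar : Ω → ℝ≥0∞)
    (htstar : ∀ ω, tstar ω =
      sInf (ENNReal.ofReal ''
        {t : ℝ | 0 ≤ t ∧
          1 ≤ -(v / 2) * ∫ s in (0:ℝ)..t, Real.exp (-(c * W s ω))}))
    (t : ℝ) (ht : 0 ≤ t) :
    P {ω | ENNReal.ofReal t ≤ tstar ω}
      = P {ω | (∫ s in (0:ℝ)..(c^2 * t / 4), Real.exp (2 * W s ω))
          ≤ -c^2 / (2 * v)} := by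
  set T := c ^ 2 * t / 4
  have hT : 0 ≤ T := by positivity
  have hB := hW.rescale (div_ne_zero (by norm_num : (-2 : ℝ) ≠ 0) hc)
  have hF : Continuous fun x => exp (2 * x) := by fun_prop
  have hevent : ∀ ω, ENNReal.ofReal t ≤ tstar ω ↔ ∫ u in (0:ℝ)..T,
      exp (2 * ((-2 / c)⁻¹ * W ((-2 / c) ^ 2 * u) ω)) ≤ -c ^ 2 / (2 * v) := fun ω => by
    rw [htstar]
    exact ofReal_le_waveBreakingTime_iff (hW.cont ω) hc hv ht
  have hlaw := congrArg (fun μ => μ (Iic (-c ^ 2 / (2 * v))))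
    (hB.map_intervalIntegral_eq hW hF hT)
  simp only [hevent]
  rwa [Measure.map_apply (hB.measurable_intervalIntegral hF hT) measurableSet_Iic,
    Measure.map_apply (hW.measurable_intervalIntegral hF hT) measurableSet_Iic] at hlaw
end

section
/- Let q₀ ∈ L¹(ℝ) ∩ L²(ℝ), let Z : [0,∞) → (0,∞) be continuous with Z(0) = 1, and set h(t) = (1/2)∫₀ᵗ Z(s) ds. For each y ∈ ℝ let t*_y = inf{ t ≥ 0 : 1 + q₀(y) h(t) ≤ 0 } (∞ if the set is empty), and define the dissipative Lagrangian solution Q^d(t,y) = Z(t)/(1/q₀(y) + h(t)) when q₀(y) ≠ 0 and t < t*_y, and Q^d(t,y) = 0 otherwise. Then the Oleinik-type one-sided bound Q^d(t,y) ≤ Z(t) / ( (1/2)∫₀ᵗ Z(s) ds ) holds for every t > 0 and every y ∈ ℝ. -/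
open MeasureTheory Real Set
open scoped ENNReal

/-! Before wave breaking `1 + q₀(y) h(t) > 0`, so the denominator
`1/q₀(y) + h(t) = (1 + q₀(y) h(t))/q₀(y)` has the sign of `q₀(y)`: for `q₀(y) < 0` the solution
is nonpositive, and for `q₀(y) > 0` the denominator exceeds `h(t)`, which is positive for `t > 0`.
After breaking `Q^d` vanishes. -/

theorem intervalIntegral_pos_of_continuousOn_Ici {Z : ℝ → ℝ} (hZpos : ∀ t, 0 ≤ t → 0 < Z t)
    (hZcont : ContinuousOn Z (Ici 0)) {t : ℝ} (ht : 0 < t) : 0 < ∫ s in (0:ℝ)..t, Z s := by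
  have hsub : uIcc 0 t ⊆ Ici 0 := by
    rw [uIcc_of_le ht.le]
    exact Icc_subset_Ici_self
  exact intervalIntegral.intervalIntegral_pos_of_pos_on (hZcont.mono hsub).intervalIntegrable
    (fun s hs => hZpos s hs.1.le) ht

theorem not_of_ofReal_lt_sInf_image {P : ℝ → Prop} {t : ℝ} (ht : 0 ≤ t)
    (hlt : ENNReal.ofReal t < sInf (ENNReal.ofReal '' {s | 0 ≤ s ∧ P s})) : ¬ P t :=
  fun hP => hlt.not_ge (sInf_le ⟨t, ⟨ht, hP⟩, rfl⟩)

theorem div_inv_add_le_div {q H z : ℝ} (hq : q ≠ 0) (hH : 0 < H) (hz : 0 ≤ z)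
    (hunbroken : 0 < 1 + q * H) : z / (1 / q + H) ≤ z / H := by
  rcases hq.lt_or_gt with hneg | hpos
  · have hden : 1 / q + H < 0 := by
      rw [show 1 / q + H = (1 + q * H) / q by field_simp]
      exact div_neg_of_pos_of_neg hunbroken hneg
    exact (div_nonpos_of_nonneg_of_nonpos hz hden.le).trans (by positivity)
  · gcongr
    linarith [one_div_pos.mpr hpos]

theorem dissipative_oleinik_bound_general
    (q₀ : ℝ → ℝ)
    (Z : ℝ → ℝ) (hZpos : ∀ t : ℝ, 0 ≤ t → 0 < Z t)
    (hZcont : ContinuousOn Z (Set.Ici (0:ℝ)))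
    (h : ℝ → ℝ) (hh : ∀ t, h t = (1/2) * ∫ s in (0:ℝ)..t, Z s)
    (tstar : ℝ → ℝ≥0∞)
    (htstar : ∀ y, tstar y =
      sInf (ENNReal.ofReal '' {t : ℝ | 0 ≤ t ∧ 1 + q₀ y * h t ≤ 0}))
    (Qd : ℝ → ℝ → ℝ)
    (hQd : ∀ t y, 0 ≤ t → q₀ y ≠ 0 → ENNReal.ofReal t < tstar y →
      Qd t y = Z t / (1 / q₀ y + h t))
    (hQdzero : ∀ t y, 0 ≤ t → (q₀ y = 0 ∨ ¬ ENNReal.ofReal t < tstar y) →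
      Qd t y = 0) :
    ∀ t : ℝ, 0 < t → ∀ y : ℝ,
      Qd t y ≤ Z t / ((1/2) * ∫ s in (0:ℝ)..t, Z s) := by
  intro t ht y
  have hht : 0 < h t := by
    rw [hh]
    exact mul_pos one_half_pos (intervalIntegral_pos_of_continuousOn_Ici hZpos hZcont ht)
  have hZt : 0 < Z t := hZpos t ht.le
  rw [← hh]
  by_cases hcase : q₀ y = 0 ∨ ¬ ENNReal.ofReal t < tstar y
  · rw [hQdzero t y ht.le hcase]
    positivity
  · obtain ⟨hq, hlt⟩ : q₀ y ≠ 0 ∧ ENNReal.ofReal t < tstar y := by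
      simpa only [not_or, not_not] using hcase
    have hunbroken : 0 < 1 + q₀ y * h t := by
      rw [htstar] at hlt
      exact not_le.mp
        (not_of_ofReal_lt_sInf_image (P := fun s => 1 + q₀ y * h s ≤ 0) ht.le hlt)
    rw [hQd t y ht.le hq hlt]
    exact div_inv_add_le_div hq hht hZt.le hunbroken

/-- Oleinik-type one-sided bound for the dissipative solution along
characteristics: `Q^d(t,y) ≤ Z(t) / ((1/2)∫₀ᵗ Z(s) ds)` for all `t > 0` and all `y`. -/
theorem dissipative_oleinik_bound
    (q₀ : ℝ → ℝ) (hq₀L1 : Integrable q₀ (volume : Measure ℝ))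
    (hq₀L2 : MemLp q₀ 2 (volume : Measure ℝ))
    (Z : ℝ → ℝ) (hZpos : ∀ t : ℝ, 0 ≤ t → 0 < Z t)
    (hZcont : ContinuousOn Z (Set.Ici (0:ℝ))) (hZ0 : Z 0 = 1)
    (h : ℝ → ℝ) (hh : ∀ t, h t = (1/2) * ∫ s in (0:ℝ)..t, Z s)
    (tstar : ℝ → ℝ≥0∞)
    (htstar : ∀ y, tstar y =
      sInf (ENNReal.ofReal '' {t : ℝ | 0 ≤ t ∧ 1 + q₀ y * h t ≤ 0}))
    (Qd : ℝ → ℝ → ℝ)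
    (hQd : ∀ t y, 0 ≤ t → q₀ y ≠ 0 → ENNReal.ofReal t < tstar y →
      Qd t y = Z t / (1 / q₀ y + h t))
    (hQdzero : ∀ t y, 0 ≤ t → (q₀ y = 0 ∨ ¬ ENNReal.ofReal t < tstar y) →
      Qd t y = 0) :
    ∀ t : ℝ, 0 < t → ∀ y : ℝ,
      Qd t y ≤ Z t / ((1/2) * ∫ s in (0:ℝ)..t, Z s) :=
  dissipative_oleinik_bound_general q₀ Z hZpos hZcont h hh tstar htstar Qd hQd hQdzero
end

section
/- Let J ∈ C^∞(ℝ) be nonnegative, even, supported in [−1,1], with ∫_ℝ J = 1, and for ε > 0 set J_ε(x) = ε⁻¹ J(x/ε). Let σ : ℝ → ℝ be continuously differentiable with |σ′(x)| ≤ L for all x, suppose the function x ↦ σ(x)σ′(x) is Lipschitz with constant M, and let q ∈ L²(ℝ). Then for every ε > 0 the function 𝔍₁(x) = ∫_ℝ J_ε′(x − y) [ 2(σ(y) − σ(x)) σ′(x) + σ(y)σ′(y) − σ(x)σ′(x) ] q(y) dy belongs to L²(ℝ) and satisfies ‖𝔍₁‖_{L²(ℝ)} ≤ (2 L² + M) ·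 ( ∫_ℝ |u| |J′(u)| du ) · ‖q‖_{L²(ℝ)}. -/
open MeasureTheory Real Set
open scoped ENNReal NNReal

lemma my_lintegral_neg (f : ℝ → ℝ≥0∞) : (∫⁻ x : ℝ, f (-x)) = ∫⁻ x : ℝ, f x := by
  rw [show (∫⁻ x : ℝ, f x) = ∫⁻ x, f x ∂(Measure.map Neg.neg (volume : Measure ℝ)) by
    rw [Measure.map_neg_eq_self]]
  exact (lintegral_map_equiv f (MeasurableEquiv.neg ℝ)).symm

lemma my_rpow_two (a : ℝ≥0∞) : a ^ (2:ℝ) = a * a := by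
  rw [show (2:ℝ) = ((2:ℕ):ℝ) by norm_num, ENNReal.rpow_natCast, sq]

/-- Young-type inequality for `p = 2`. -/
lemma my_young (g : ℝ → ℝ≥0∞) (hg : Measurable g) (hA : (∫⁻ u, g u) ≠ ∞)
    (h : ℝ → ℝ≥0∞) (hh : AEMeasurable h (volume : Measure ℝ)) :
    (∫⁻ x : ℝ, (∫⁻ y : ℝ, g (x - y) * h y) ^ (2:ℝ)) ^ (1/2 : ℝ)
      ≤ (∫⁻ u, g u) * (∫⁻ y : ℝ, (h y) ^ (2:ℝ)) ^ (1/2 : ℝ) := by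
  set A := ∫⁻ u, g u with hA'
  have hgx : ∀ x : ℝ, (∫⁻ y : ℝ, g (x - y)) = A := by
    intro x
    calc (∫⁻ y : ℝ, g (x - y)) = ∫⁻ y : ℝ, (fun u => g (-u)) (y - x) := by
          simp [neg_sub]
      _ = ∫⁻ u : ℝ, g (-u) := lintegral_sub_right_eq_self (fun u => g (-u)) x
      _ = A := my_lintegral_neg g
  have key : ∀ x : ℝ, (∫⁻ y : ℝ, g (x - y) * h y) ^ (2:ℝ)
      ≤ A * ∫⁻ y : ℝ, g (x - y) * (h y) ^ (2:ℝ) := by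
    intro x
    have hconj : Real.HolderConjugate 2 2 := Real.HolderConjugate.two_two
    have hgm : Measurable fun y : ℝ => g (x - y) :=
      hg.comp (measurable_const.sub measurable_id)
    have hf1 : AEMeasurable (fun y : ℝ => (g (x - y)) ^ (1/2:ℝ)) volume :=
      (hgm.pow_const _).aemeasurable
    have hf2 : AEMeasurable (fun y : ℝ => (g (x - y)) ^ (1/2:ℝ) * h y) volume :=
      hf1.mul hh
    have H := ENNReal.lintegral_mul_le_Lp_mul_Lq volume hconj hf1 hf2
    have e1 : ∀ y : ℝ, ((fun y : ℝ => (g (x - y)) ^ (1/2:ℝ)) *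
        (fun y : ℝ => (g (x - y)) ^ (1/2:ℝ) * h y)) y = g (x - y) * h y := by
      intro y
      show (g (x-y)) ^ (1/2:ℝ) * ((g (x-y)) ^ (1/2:ℝ) * h y) = _
      rw [← mul_assoc, ← ENNReal.rpow_add_of_nonneg _ _ (by norm_num) (by norm_num)]
      norm_num
    have e2 : ∀ y : ℝ, ((g (x - y)) ^ (1/2:ℝ)) ^ (2:ℝ) = g (x - y) := by
      intro y
      rw [← ENNReal.rpow_mul]; norm_num
    have e3 : ∀ y : ℝ, ((g (x - y)) ^ (1/2:ℝ) * h y) ^ (2:ℝ)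
        = g (x - y) * (h y) ^ (2:ℝ) := by
      intro y
      rw [ENNReal.mul_rpow_of_nonneg _ _ (by norm_num), e2]
    simp only [e1, e2, e3, hgx x] at H
    calc (∫⁻ y : ℝ, g (x - y) * h y) ^ (2:ℝ)
        ≤ (A ^ (1/2:ℝ) * (∫⁻ y : ℝ, g (x - y) * (h y) ^ (2:ℝ)) ^ (1/2:ℝ)) ^ (2:ℝ) :=
          ENNReal.rpow_le_rpow H (by norm_num)
      _ = A * ∫⁻ y : ℝ, g (x - y) * (h y) ^ (2:ℝ) := by
          rw [ENNReal.mul_rpow_of_nonneg _ _ (by norm_num), ← ENNReal.rpow_mul,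
            ← ENNReal.rpow_mul]
          norm_num
  have hswap : (∫⁻ x : ℝ, ∫⁻ y : ℝ, g (x - y) * (h y) ^ (2:ℝ))
      = A * ∫⁻ y : ℝ, (h y) ^ (2:ℝ) := by
    have hprod : AEMeasurable (Function.uncurry fun x y : ℝ => g (x - y) * (h y) ^ (2:ℝ))
        ((volume : Measure ℝ).prod volume) := by
      have h1 : Measurable fun z : ℝ × ℝ => g (z.1 - z.2) :=
        hg.comp (measurable_fst.sub measurable_snd)
      have h2 : AEMeasurable (fun z : ℝ × ℝ => h z.2)
          ((volume : Measure ℝ).prod volume) :=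
        hh.comp_quasiMeasurePreserving Measure.quasiMeasurePreserving_snd
      have h3 : AEMeasurable (fun z : ℝ × ℝ => (h z.2) ^ (2:ℝ))
          ((volume : Measure ℝ).prod volume) := by
        simp only [my_rpow_two]; exact h2.mul h2
      exact h1.aemeasurable.mul h3
    rw [lintegral_lintegral_swap hprod]
    have inner : ∀ y : ℝ, (∫⁻ x : ℝ, g (x - y) * (h y) ^ (2:ℝ)) = (h y) ^ (2:ℝ) * A := by
      intro y
      rw [show (fun x : ℝ => g (x - y) * (h y) ^ (2:ℝ))
            = fun x : ℝ => (h y) ^ (2:ℝ) * g (x - y) by funext x; ring]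
      have hm : AEMeasurable (fun x : ℝ => g (x - y)) volume :=
        (hg.comp (measurable_id.sub measurable_const)).aemeasurable
      rw [lintegral_const_mul'' _ hm, lintegral_sub_right_eq_self g y]
    simp only [inner]
    rw [lintegral_mul_const' A _ hA]
    ring
  calc (∫⁻ x : ℝ, (∫⁻ y : ℝ, g (x - y) * h y) ^ (2:ℝ)) ^ (1/2 : ℝ)
      ≤ (∫⁻ x : ℝ, A * ∫⁻ y : ℝ, g (x - y) * (h y) ^ (2:ℝ)) ^ (1/2 : ℝ) :=
        ENNReal.rpow_le_rpow (lintegral_mono key) (by norm_num)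
    _ = (A * (A * ∫⁻ y : ℝ, (h y) ^ (2:ℝ))) ^ (1/2 : ℝ) := by
        rw [lintegral_const_mul' A _ hA, hswap]
    _ = (∫⁻ u, g u) * (∫⁻ y : ℝ, (h y) ^ (2:ℝ)) ^ (1/2 : ℝ) := by
        rw [← mul_assoc, ← my_rpow_two A,
          ENNReal.mul_rpow_of_nonneg _ _ (by norm_num : (0:ℝ) ≤ 1/2), ← ENNReal.rpow_mul]
        norm_num
        rfl


/-- First-order commutator estimate: for a standard mollifier
`J_ε(x) = ε⁻¹J(x/ε)`, a `C¹` function `σ` with `|σ′| ≤ L` and `σσ′` Lipschitz with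
constant `M`, and `q ∈ L²(ℝ)`, the function
`𝔍₁(x) = ∫ J_ε′(x−y)[2(σ(y)−σ(x))σ′(x) + σ(y)σ′(y) − σ(x)σ′(x)] q(y) dy`
lies in `L²(ℝ)` with `‖𝔍₁‖₂ ≤ (2L² + M)(∫ |u||J′(u)| du)‖q‖₂`. -/
theorem commutator_first_order_bound
    (J : ℝ → ℝ) (hJsmooth : ContDiff ℝ (⊤ : ℕ∞) J) (hJnonneg : ∀ x, 0 ≤ J x)
    (hJeven : ∀ x, J (-x) = J x)
    (hJsupp : Function.support J ⊆ Set.Icc (-1 : ℝ) 1)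
    (hJint : ∫ x : ℝ, J x = 1)
    (ε : ℝ) (hε : 0 < ε)
    (Jε : ℝ → ℝ) (hJε : ∀ x, Jε x = ε⁻¹ * J (x / ε))
    (σ : ℝ → ℝ) (hσ : ContDiff ℝ 1 σ)
    (L : ℝ≥0) (hL : ∀ x, |deriv σ x| ≤ L)
    (M : ℝ≥0) (hM : LipschitzWith M (fun x => σ x * deriv σ x))
    (q : ℝ → ℝ) (hq : MemLp q 2 (volume : Measure ℝ))
    (F : ℝ → ℝ)
    (hF : ∀ x, F x = ∫ y : ℝ,
      deriv Jε (x - y)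
        * (2 * (σ y - σ x) * deriv σ x + (σ y * deriv σ y - σ x * deriv σ x))
        * q y) :
    MemLp F 2 (volume : Measure ℝ) ∧
    eLpNorm F 2 (volume : Measure ℝ)
      ≤ ENNReal.ofReal ((2 * (L : ℝ)^2 + (M : ℝ)) * ∫ u : ℝ, |u| * |deriv J u|)
          * eLpNorm q 2 (volume : Measure ℝ) := by
  -- basic facts about Jε
  have hJεfun : Jε = fun x => ε⁻¹ * J (x / ε) := funext hJε
  have hJεcd : ContDiff ℝ (⊤ : ℕ∞) Jε := by
    rw [hJεfun]
    exact contDiff_const.mul (hJsmooth.comp (contDiff_id.div_const ε))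
  have hJd : Differentiable ℝ J := hJsmooth.differentiable (by simp)
  have hJεderiv : ∀ x, deriv Jε x = ε⁻¹ * (deriv J (x / ε) * ε⁻¹) := by
    intro x
    have h1 : HasDerivAt (fun x : ℝ => x / ε) ε⁻¹ x := by
      simpa using (hasDerivAt_id x).div_const ε
    have h2 : HasDerivAt J (deriv J (x / ε)) (x / ε) := (hJd (x / ε)).hasDerivAt
    have h3 : HasDerivAt Jε (ε⁻¹ * (deriv J (x / ε) * ε⁻¹)) x := by
      rw [hJεfun]
      exact (h2.comp x h1).const_mul ε⁻¹
    exact h3.deriv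
  have hJεsupp : ∀ x, x ∉ Set.Icc (-ε) ε → Jε x = 0 := by
    intro x hx
    rw [hJε]
    suffices hz : J (x / ε) = 0 by rw [hz, mul_zero]
    by_contra hcon
    apply hx
    have hmem := hJsupp (Function.mem_support.mpr hcon)
    obtain ⟨h1, h2⟩ := hmem
    constructor
    · have := (le_div_iff₀ hε).mp h1
      linarith
    · have := (div_le_one hε).mp h2
      exact this.trans (le_refl ε) |>.trans (le_refl ε)
  have hJεcs : HasCompactSupport Jε :=
    HasCompactSupport.intro isCompact_Icc hJεsupp
  have hJεdcs : HasCompactSupport (deriv Jε) := hJεcs.deriv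
  have hJεdc : Continuous (deriv Jε) := hJεcd.continuous_deriv (by simp)
  -- the kernel profile φ and its integral
  set φ : ℝ → ℝ := fun u => |u| * |deriv Jε u| with hφ
  have hφc : Continuous φ := continuous_abs.mul hJεdc.abs
  have hφcs : HasCompactSupport φ := hJεdcs.abs.mul_left
  have hφint : Integrable φ (volume : Measure ℝ) :=
    hφc.integrable_of_hasCompactSupport hφcs
  have hφnonneg : ∀ u, 0 ≤ φ u := fun u => mul_nonneg (abs_nonneg _) (abs_nonneg _)
  -- change of variables: ∫ φ = ∫ |u| |J' u|
  have hφval : (∫ u : ℝ, φ u) = ∫ u : ℝ, |u| * |deriv J u| := by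
    have hstep : ∀ u : ℝ, φ u = (fun v => ε⁻¹ * (|v| * |deriv J v|)) (u / ε) := by
      intro u
      show |u| * |deriv Jε u| = ε⁻¹ * (|u / ε| * |deriv J (u / ε)|)
      rw [hJεderiv u, abs_mul, abs_mul, abs_of_pos (inv_pos.mpr hε),
        abs_div, abs_of_pos hε, div_eq_mul_inv]
      ring
    calc (∫ u : ℝ, φ u) = ∫ u : ℝ, (fun v => ε⁻¹ * (|v| * |deriv J v|)) (u / ε) := by
          simp_rw [hstep]
      _ = |ε| • ∫ v : ℝ, ε⁻¹ * (|v| * |deriv J v|) := by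
          exact MeasureTheory.Measure.integral_comp_div
            (fun v => ε⁻¹ * (|v| * |deriv J v|)) ε
      _ = ∫ u : ℝ, |u| * |deriv J u| := by
        rw [integral_const_mul, smul_eq_mul, abs_of_pos hε, ← mul_assoc,
          mul_inv_cancel₀ hε.ne', one_mul]
  -- kernel in ℝ≥0∞
  set g : ℝ → ℝ≥0∞ := fun u => ENNReal.ofReal (φ u) with hgdef
  have hgmeas : Measurable g := (ENNReal.measurable_ofReal.comp hφc.measurable)
  have hAeq : (∫⁻ u, g u) = ENNReal.ofReal (∫ u : ℝ, |u| * |deriv J u|) := by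
    rw [← hφval]
    exact (MeasureTheory.ofReal_integral_eq_lintegral_ofReal hφint
      (ae_of_all _ hφnonneg)).symm
  have hAne : (∫⁻ u, g u) ≠ ∞ := by rw [hAeq]; exact ENNReal.ofReal_ne_top
  set h : ℝ → ℝ≥0∞ := fun y => (‖q y‖₊ : ℝ≥0∞) with hhdef
  have hhmeas : AEMeasurable h (volume : Measure ℝ) := hq.1.aemeasurable.enorm
  -- the constant
  set C : ℝ := 2 * (L : ℝ)^2 + (M : ℝ) with hCdef
  have hC : 0 ≤ C := by positivity
  -- Lipschitz bound on σ
  have hσLip : LipschitzWith L σ := by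
    apply lipschitzWith_of_nnnorm_deriv_le (hσ.differentiable one_ne_zero)
    intro x
    rw [← NNReal.coe_le_coe, coe_nnnorm, Real.norm_eq_abs]
    exact hL x
  have hb : ∀ x y : ℝ,
      |2 * (σ y - σ x) * deriv σ x + (σ y * deriv σ y - σ x * deriv σ x)|
        ≤ C * |x - y| := by
    intro x y
    have h1 : |σ y - σ x| ≤ (L : ℝ) * |x - y| := by
      have := hσLip.dist_le_mul y x
      rwa [Real.dist_eq, Real.dist_eq, abs_sub_comm y x] at this
    have h2 : |σ y * deriv σ y - σ x * deriv σ x| ≤ (M : ℝ) * |x - y| := by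
      have := hM.dist_le_mul y x
      rwa [Real.dist_eq, Real.dist_eq, abs_sub_comm y x] at this
    have h3 : |2 * (σ y - σ x) * deriv σ x| ≤ 2 * ((L : ℝ) * |x - y|) * (L : ℝ) := by
      rw [abs_mul, abs_mul, abs_two]
      exact mul_le_mul (mul_le_mul_of_nonneg_left h1 (by norm_num))
        (hL x) (abs_nonneg _) (by positivity)
    calc |2 * (σ y - σ x) * deriv σ x + (σ y * deriv σ y - σ x * deriv σ x)|
        ≤ |2 * (σ y - σ x) * deriv σ x| + |σ y * deriv σ y - σ x * deriv σ x| :=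
          abs_add_le _ _
      _ ≤ 2 * ((L : ℝ) * |x - y|) * (L : ℝ) + (M : ℝ) * |x - y| := add_le_add h3 h2
      _ = C * |x - y| := by rw [hCdef]; ring
  -- pointwise bound for ‖F x‖
  have hFx : ∀ x : ℝ, (‖F x‖₊ : ℝ≥0∞)
      ≤ ENNReal.ofReal C * ∫⁻ y : ℝ, g (x - y) * h y := by
    intro x
    rw [hF x]
    refine le_trans (enorm_integral_le_lintegral_enorm _) ?_
    rw [← lintegral_const_mul' _ _ ENNReal.ofReal_ne_top]
    refine lintegral_mono fun y => ?_
    rw [← ofReal_norm, Real.norm_eq_abs]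
    calc ENNReal.ofReal
          |deriv Jε (x - y)
            * (2 * (σ y - σ x) * deriv σ x + (σ y * deriv σ y - σ x * deriv σ x))
            * q y|
        ≤ ENNReal.ofReal (|deriv Jε (x - y)| * (C * |x - y|) * |q y|) := by
          apply ENNReal.ofReal_le_ofReal
          rw [abs_mul, abs_mul]
          exact mul_le_mul_of_nonneg_right
            (mul_le_mul_of_nonneg_left (hb x y) (abs_nonneg _)) (abs_nonneg _)
      _ = ENNReal.ofReal C * (g (x - y) * h y) := by
          rw [show |deriv Jε (x - y)| * (C * |x - y|) * |q y|
              = C * ((|x - y| * |deriv Jε (x - y)|) * |q y|) by ring]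
          have hqy : (‖q y‖₊ : ℝ≥0∞) = ENNReal.ofReal |q y| := by
            exact (ofReal_norm (q y)).symm.trans (by rw [Real.norm_eq_abs])
          rw [ENNReal.ofReal_mul hC, ENNReal.ofReal_mul (by positivity), ← hqy]
  -- measurability of F
  have hcσ : Continuous σ := hσ.continuous
  have hcσ' : Continuous (deriv σ) := hσ.continuous_deriv le_rfl
  have hKcont : Continuous fun p : ℝ × ℝ =>
      deriv Jε (p.1 - p.2)
        * (2 * (σ p.2 - σ p.1) * deriv σ p.1
            + (σ p.2 * deriv σ p.2 - σ p.1 * deriv σ p.1)) :=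
    (hJεdc.comp (continuous_fst.sub continuous_snd)).mul
      (((continuous_const.mul ((hcσ.comp continuous_snd).sub
          (hcσ.comp continuous_fst))).mul (hcσ'.comp continuous_fst)).add
        (((hcσ.comp continuous_snd).mul (hcσ'.comp continuous_snd)).sub
          ((hcσ.comp continuous_fst).mul (hcσ'.comp continuous_fst))))
  have hKmeas : AEStronglyMeasurable
      (fun p : ℝ × ℝ => deriv Jε (p.1 - p.2)
        * (2 * (σ p.2 - σ p.1) * deriv σ p.1
            + (σ p.2 * deriv σ p.2 - σ p.1 * deriv σ p.1))
        * q p.2) ((volume : Measure ℝ).prod volume) :=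
    hKcont.aestronglyMeasurable.mul hq.1.comp_snd
  have hFmeas : AEStronglyMeasurable F (volume : Measure ℝ) := by
    have hFeq : F = fun x : ℝ => ∫ y : ℝ,
        (fun p : ℝ × ℝ => deriv Jε (p.1 - p.2)
          * (2 * (σ p.2 - σ p.1) * deriv σ p.1
              + (σ p.2 * deriv σ p.2 - σ p.1 * deriv σ p.1))
          * q p.2) (x, y) := by
      funext x; rw [hF x]
    rw [hFeq]
    exact hKmeas.integral_prod_right'
  -- eLpNorm rewrites
  have hsnF : eLpNorm F 2 (volume : Measure ℝ)
      = (∫⁻ x : ℝ, (‖F x‖₊ : ℝ≥0∞) ^ (2:ℝ)) ^ (1/2:ℝ) := by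
    rw [eLpNorm_eq_lintegral_rpow_enorm_toReal (by norm_num) (by norm_num)]
    norm_num
    rfl
  have hsnq : eLpNorm q 2 (volume : Measure ℝ)
      = (∫⁻ y : ℝ, (h y) ^ (2:ℝ)) ^ (1/2:ℝ) := by
    rw [eLpNorm_eq_lintegral_rpow_enorm_toReal (by norm_num) (by norm_num)]
    norm_num
    rfl
  -- the main estimate
  have hbound : eLpNorm F 2 (volume : Measure ℝ)
      ≤ ENNReal.ofReal (C * ∫ u : ℝ, |u| * |deriv J u|)
          * eLpNorm q 2 (volume : Measure ℝ) := by
    rw [hsnF, hsnq]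
    calc (∫⁻ x : ℝ, (‖F x‖₊ : ℝ≥0∞) ^ (2:ℝ)) ^ (1/2:ℝ)
        ≤ (∫⁻ x : ℝ, (ENNReal.ofReal C * ∫⁻ y : ℝ, g (x - y) * h y) ^ (2:ℝ))
            ^ (1/2:ℝ) := by
          apply ENNReal.rpow_le_rpow _ (by norm_num)
          exact lintegral_mono fun x => ENNReal.rpow_le_rpow (hFx x) (by norm_num)
      _ = (ENNReal.ofReal C ^ (2:ℝ)
            * ∫⁻ x : ℝ, (∫⁻ y : ℝ, g (x - y) * h y) ^ (2:ℝ)) ^ (1/2:ℝ) := by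
          simp_rw [ENNReal.mul_rpow_of_nonneg _ _ (by norm_num : (0:ℝ) ≤ 2)]
          rw [lintegral_const_mul' _ _
            (ENNReal.rpow_ne_top_of_nonneg (by norm_num) ENNReal.ofReal_ne_top)]
      _ = ENNReal.ofReal C
            * ((∫⁻ x : ℝ, (∫⁻ y : ℝ, g (x - y) * h y) ^ (2:ℝ)) ^ (1/2:ℝ)) := by
          rw [ENNReal.mul_rpow_of_nonneg _ _ (by norm_num : (0:ℝ) ≤ 1/2),
            ← ENNReal.rpow_mul]
          norm_num
      _ ≤ ENNReal.ofReal C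
            * ((∫⁻ u, g u) * (∫⁻ y : ℝ, (h y) ^ (2:ℝ)) ^ (1/2:ℝ)) :=
          mul_le_mul_right (my_young g hgmeas hAne h hhmeas) _
      _ = ENNReal.ofReal (C * ∫ u : ℝ, |u| * |deriv J u|)
            * (∫⁻ y : ℝ, (h y) ^ (2:ℝ)) ^ (1/2:ℝ) := by
          rw [hAeq, ← mul_assoc, ← ENNReal.ofReal_mul hC]
  refine ⟨⟨hFmeas, ?_⟩, hbound⟩
  exact lt_of_le_of_lt hbound (ENNReal.mul_lt_top ENNReal.ofReal_lt_top hq.2)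
end

section
/- Fix real numbers a < b, an integer n ≥ 1, and values V₁, …, Vₙ ∈ ℝ. Set x_i = a + i(b−a)/n, and for t ≥ 0 define the characteristics Xᵢⁿ(t) = a + ((b−a)/(4n)) Σ_{j=1}^{i} (2 + V_j t)² 1_{{2 + V_j t > 0}} for i = 0, …, n, the function qⁿ(t,x) = Σ_{i=1}^{n} (2V_i/(2 + V_i t)) 1_{{Xᵢ₋₁ⁿ(t) < x < Xᵢⁿ(t) and 2 + V_i t > 0}}, and uⁿ(t,x) = ∫_{−∞}^{x} qⁿ(t,y) dy. Then for every i ∈ {0, …, n} and every t ≥ 0 such that 2 + V_j t ≠ 0 for all j ≤ i, the function Xᵢⁿ is differentiable at t with (d/dt) Xᵢⁿ(t) = uⁿ(t, Xᵢⁿ(t)). -/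
/-!
Write `c = (b - a) / (4n)` and `g_j(t) = 2 + V_j t`. Then `Xᵢ(t) = a + c ∑_{j<i} (g_j⁺)²`, and since
`(x⁺)²` is `C¹` with derivative `2x⁺`, `Ẋᵢ(t) = c ∑_{j<i} 2 V_j g_j(t)⁺`. On the other side, `qⁿ(t, ·)`
is a step function whose `j`-th step sits on `(X_j, X_{j+1})`, has width `c (g_j⁺)²` and height
`2 V_j / g_j`; the steps are ordered left to right, so integrating up to `Xᵢ(t)` picks up exactly
the first `i` of them, which gives the same sum.
-/

open Asymptotics Filter MeasureTheory Set

theorem hasDerivAt_sq_mul_ite_pos (x : ℝ) :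
    HasDerivAt (fun y : ℝ => y ^ 2 * if 0 < y then (1 : ℝ) else 0)
      (2 * x * if 0 < x then 1 else 0) x := by
  rcases lt_trichotomy x 0 with hx | rfl | hx
  · rw [if_neg hx.not_gt, mul_zero]
    refine (hasDerivAt_const x 0).congr_of_eventuallyEq ?_
    filter_upwards [Iio_mem_nhds hx] with y hy
    rw [if_neg (not_lt.2 (le_of_lt hy)), mul_zero]
  · rw [mul_zero, zero_mul, hasDerivAt_iff_isLittleO_nhds_zero]
    refine IsBigO.trans_isLittleO (g := fun h : ℝ => h ^ 2) ?_ (isLittleO_pow_id one_lt_two)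
    refine IsBigO.of_bound 1 (Eventually.of_forall fun h => ?_)
    split_ifs <;> simp [sq_nonneg]
  · rw [if_pos hx, mul_one]
    refine ((hasDerivAt_pow 2 x).congr_deriv (by ring)).congr_of_eventuallyEq ?_
    filter_upwards [Ioi_mem_nhds hx] with y hy
    rw [if_pos (show 0 < y from hy), mul_one]

theorem hasDerivAt_affine_sq_mul_ite_pos (α v t : ℝ) :
    HasDerivAt (fun s => (α + v * s) ^ 2 * if 0 < α + v * s then (1 : ℝ) else 0)
      (2 * (α + v * t) * (if 0 < α + v * t then 1 else 0) * v) t := by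
  have hg : HasDerivAt (fun s => α + v * s) v t := by
    simpa using ((hasDerivAt_id' t).const_mul v).const_add α
  exact (hasDerivAt_sq_mul_ite_pos _).comp t hg

theorem setIntegral_Iio_indicator_Ioo_of_lt {x : ℕ → ℝ} (hx : Monotone x) (d : ℝ) {i k : ℕ}
    (hki : k < i) :
    ∫ y in Iio (x i), (Ioo (x k) (x (k + 1))).indicator (fun _ => d) y = (x (k + 1) - x k) * d := by
  have hsub : Ioo (x k) (x (k + 1)) ⊆ Iio (x i) := fun y hy => hy.2.trans_le (hx hki)
  rw [setIntegral_indicator measurableSet_Ioo, inter_eq_right.2 hsub, setIntegral_const,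
    smul_eq_mul, measureReal_def, Real.volume_Ioo, ENNReal.toReal_ofReal (sub_nonneg.2 (hx k.le_succ))]

theorem setIntegral_Iio_indicator_Ioo_of_le {x : ℕ → ℝ} (hx : Monotone x) (d : ℝ) {i k : ℕ}
    (hik : i ≤ k) :
    ∫ y in Iio (x i), (Ioo (x k) (x (k + 1))).indicator (fun _ => d) y = 0 := by
  have hdisj : Iio (x i) ∩ Ioo (x k) (x (k + 1)) = ∅ :=
    eq_empty_of_forall_notMem fun y hy => (hy.1.trans_le (hx hik)).not_gt hy.2.1
  rw [setIntegral_indicator measurableSet_Ioo, hdisj, Measure.restrict_empty, integral_zero_measure]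

theorem setIntegral_Iio_sum_indicator_Ioo {x : ℕ → ℝ} (hx : Monotone x) (d : ℕ → ℝ) {i n : ℕ}
    (hi : i ≤ n) :
    ∫ y in Iio (x i), ∑ k ∈ Finset.range n, (Ioo (x k) (x (k + 1))).indicator (fun _ => d k) y
      = ∑ k ∈ Finset.range i, (x (k + 1) - x k) * d k := by
  rw [integral_finsetSum _ fun k _ => (integrableOn_const measure_Ioo_lt_top.ne).integrable_indicator
    measurableSet_Ioo |>.restrict, ← Finset.sum_range_add_sum_Ico _ hi,
    Finset.sum_congr rfl fun k hk => setIntegral_Iio_indicator_Ioo_of_lt hx (d k) (Finset.mem_range.1 hk),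
    Finset.sum_eq_zero fun k hk => setIntegral_Iio_indicator_Ioo_of_le hx (d k) (Finset.mem_Ico.1 hk).1,
    add_zero]

/-- `V j` (for `j < n`) is the value on the `(j+1)`-st subinterval. -/
theorem box_characteristics_ode_general
    (a b : ℝ) (hab : a < b) (n : ℕ) (V : ℕ → ℝ)
    (X : ℕ → ℝ → ℝ)
    (hX : ∀ i t, X i t = a + ((b - a) / (4 * n))
      * ∑ j ∈ Finset.range i,
          (2 + V j * t)^2 * (if 0 < 2 + V j * t then (1:ℝ) else 0))
    (q : ℝ → ℝ → ℝ)
    (hq : ∀ t x, q t x = ∑ i ∈ Finset.range n,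
      (2 * V i / (2 + V i * t))
        * (if X i t < x ∧ x < X (i+1) t ∧ 0 < 2 + V i * t then (1:ℝ) else 0))
    (u : ℝ → ℝ → ℝ)
    (hu : ∀ t x, u t x = ∫ y in Set.Iio x, q t y) :
    ∀ i ≤ n, ∀ t : ℝ, 0 ≤ t → (∀ j < i, 2 + V j * t ≠ 0) →
      HasDerivAt (X i) (u t (X i t)) t := by
  intro i hi t _ _
  set c := (b - a) / (4 * n)
  set f : ℕ → ℝ → ℝ := fun j s => (2 + V j * s) ^ 2 * if 0 < 2 + V j * s then 1 else 0
  have hstep : ∀ k, X (k + 1) t - X k t = c * f k t := fun k => by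
    rw [hX, hX, Finset.sum_range_succ]; ring
  have hmono : Monotone (X · t) := monotone_nat_of_le_succ fun k => by
    have : 0 ≤ c * f k t := mul_nonneg (div_nonneg (sub_nonneg.2 hab.le) (by positivity))
      (mul_nonneg (sq_nonneg _) (by split_ifs <;> norm_num))
    linarith [hstep k]
  have hq_step : q t = fun y => ∑ k ∈ Finset.range n,
      (Ioo (X k t) (X (k + 1) t)).indicator (fun _ => 2 * V k / (2 + V k * t)) y := by
    funext y
    refine (hq t y).trans (Finset.sum_congr rfl fun k _ => ?_)
    by_cases hk : 0 < 2 + V k * t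
    · simp [indicator_apply, hk]
    · -- a non-positive `2 + V k * t` makes the `k`-th step empty
      have : X (k + 1) t = X k t := by
        simpa [f, hk, sub_eq_zero] using hstep k
      simp [this, hk]
  have hu_eq : u t (X i t) = c * ∑ j ∈ Finset.range i,
      2 * (2 + V j * t) * (if 0 < 2 + V j * t then 1 else 0) * V j := by
    rw [hu, hq_step, setIntegral_Iio_sum_indicator_Ioo hmono _ hi, Finset.mul_sum]
    refine Finset.sum_congr rfl fun k _ => ?_
    rw [hstep]
    rcases eq_or_ne (2 + V k * t) 0 with h | h
    · simp [f, h]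
    · field_simp [f]; ring
  have hX_eq : X i = fun s => a + c * ∑ j ∈ Finset.range i, f j s := funext (hX i)
  rw [hu_eq, hX_eq]
  exact ((HasDerivAt.fun_sum fun j _ =>
    hasDerivAt_affine_sq_mul_ite_pos 2 (V j) t).const_mul c).const_add a

/-- The characteristics of the explicit dissipative solution of the
deterministic Hunter–Saxton equation with `n`-step initial data satisfy the
characteristic ODE `(d/dt)Xᵢⁿ(t) = uⁿ(t, Xᵢⁿ(t))` away from wave-breaking times.
(Here `V j` for `j < n` is the value on the `(j+1)`-st subinterval.) -/
theorem box_characteristics_ode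
    (a b : ℝ) (hab : a < b) (n : ℕ) (hn : 1 ≤ n) (V : ℕ → ℝ)
    (X : ℕ → ℝ → ℝ)
    (hX : ∀ i t, X i t = a + ((b - a) / (4 * n))
      * ∑ j ∈ Finset.range i,
          (2 + V j * t)^2 * (if 0 < 2 + V j * t then (1:ℝ) else 0))
    (q : ℝ → ℝ → ℝ)
    (hq : ∀ t x, q t x = ∑ i ∈ Finset.range n,
      (2 * V i / (2 + V i * t))
        * (if X i t < x ∧ x < X (i+1) t ∧ 0 < 2 + V i * t then (1:ℝ) else 0))
    (u : ℝ → ℝ → ℝ)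
    (hu : ∀ t x, u t x = ∫ y in Set.Iio x, q t y) :
    ∀ i ≤ n, ∀ t : ℝ, 0 ≤ t → (∀ j < i, 2 + V j * t ≠ 0) →
      HasDerivAt (X i) (u t (X i t)) t :=
  box_characteristics_ode_general a b hab n V X hX q hq u hu
end

section
/- Fix real numbers a < b, an integer n ≥ 1, and values V₁, …, Vₙ ∈ ℝ. With Xᵢⁿ(t) = a + ((b−a)/(4n)) Σ_{j=1}^{i} (2 + V_j t)² 1_{{2 + V_j t > 0}} and qⁿ(t,x) = Σ_{i=1}^{n} (2V_i/(2 + V_i t)) 1_{{Xᵢ₋₁ⁿ(t) < x < Xᵢⁿ(t) and 2 + V_i t > 0}}, one has for every t ≥ 0: ∫_ℝ qⁿ(t,x)² dx = ((b−a)/n) Σ_{i=1}^{n} V_i² 1_{{2 + V_i t > 0}} ≤ ((b−a)/n) Σ_{i=1}^{n} V_i² = ∫_ℝ qⁿ(0,x)² dx. In particular the energy t ↦ ‖qⁿ(t)‖²_{L²(ℝ)} is nonincreasing, and it drops by ((b−a)/n) V_i² exactly at each wave-breaking time t = −2/V_i with V_i < 0. -/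
/-!
Between wave breakings the `i`-th box is the interval `(Xᵢ₋₁, Xᵢ)` of length
`((b−a)/(4n)) (2 + Vᵢt)²` carrying the constant value `2Vᵢ/(2 + Vᵢt)`, so it contributes exactly
`((b−a)/n) Vᵢ²` to `∫ q²`; once `2 + Vᵢt ≤ 0` the box has collapsed to a point and contributes
nothing. Since the boxes are disjoint the energy is the sum of these contributions, and as
`t ↦ 2 + Vᵢt` is affine and equals `2` at `t = 0`, a box that has broken stays broken. Just before
the breaking time `−2/Vᵢ` the boxes with `2 + Vⱼt = 0` there are still alive, which gives the jump.
-/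

open MeasureTheory Real Set Filter Topology

theorem Finset.sq_sum_eq_sum_sq_of_mul_eq_zero {ι R : Type*} [CommSemiring R] (s : Finset ι)
    (f : ι → R) (h : ∀ i ∈ s, ∀ j ∈ s, i ≠ j → f i * f j = 0) :
    (∑ i ∈ s, f i) ^ 2 = ∑ i ∈ s, f i ^ 2 := by
  rw [sq, Finset.sum_mul_sum]
  refine Finset.sum_congr rfl fun i hi => ?_
  rw [Finset.sum_eq_single i (fun j hj hji => h i hi j hj hji.symm) (absurd hi), sq]

theorem integral_sq_sum_mul_indicator_one {α ι : Type*} [MeasurableSpace α] (μ : Measure α)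
    (s : Finset ι) (S : ι → Set α) (c : ι → ℝ) (hS : ∀ i ∈ s, MeasurableSet (S i))
    (hS_fin : ∀ i ∈ s, μ (S i) ≠ ⊤) (hdisj : (s : Set ι).PairwiseDisjoint S) :
    ∫ x, (∑ i ∈ s, c i * (S i).indicator 1 x) ^ 2 ∂μ = ∑ i ∈ s, μ.real (S i) * c i ^ 2 := by
  have hsq : ∀ x, (∑ i ∈ s, c i * (S i).indicator 1 x) ^ 2
      = ∑ i ∈ s, c i ^ 2 * (S i).indicator (1 : α → ℝ) x := by
    intro x
    rw [Finset.sq_sum_eq_sum_sq_of_mul_eq_zero]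
    · refine Finset.sum_congr rfl fun i _ => ?_
      by_cases hx : x ∈ S i <;> simp [hx]
    · intro i hi j hj hij
      by_cases hx : x ∈ S i
      · simp [(hdisj hi hj hij).notMem_of_mem_left hx]
      · simp [hx]
  simp_rw [hsq]
  rw [integral_finsetSum]
  · refine Finset.sum_congr rfl fun i hi => ?_
    rw [integral_const_mul, integral_indicator_one (hS i hi), mul_comm]
  · intro i hi
    refine Integrable.const_mul ?_ _
    exact (integrable_indicator_iff (hS i hi)).2 (integrableOn_const (hS_fin i hi))

theorem integral_sq_sum_mul_indicator_Ioo {ι : Type*} (s : Finset ι) (l r c : ι → ℝ)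
    (hlr : ∀ i ∈ s, l i ≤ r i) (hdisj : (s : Set ι).PairwiseDisjoint fun i => Ioo (l i) (r i)) :
    ∫ x, (∑ i ∈ s, c i * (Ioo (l i) (r i)).indicator 1 x) ^ 2
      = ∑ i ∈ s, (r i - l i) * c i ^ 2 := by
  rw [integral_sq_sum_mul_indicator_one volume s _ c (fun _ _ => measurableSet_Ioo)
    (fun _ _ => measure_Ioo_lt_top.ne) hdisj]
  refine Finset.sum_congr rfl fun i hi => ?_
  rw [Real.volume_real_Ioo_of_le (hlr i hi)]

theorem two_add_mul_pos_of_le {v s t : ℝ} (hs : 0 ≤ s) (hst : s ≤ t) (ht : 0 < 2 + v * t) :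
    0 < 2 + v * s := by
  rcases le_or_gt 0 v with hv | hv <;> nlinarith

theorem antitoneOn_sum_sq_mul_ite_pos {ι : Type*} (s : Finset ι) (V : ι → ℝ) :
    AntitoneOn (fun t => ∑ i ∈ s, V i ^ 2 * if 0 < 2 + V i * t then (1 : ℝ) else 0) (Ici 0) := by
  intro t₁ ht₁ t₂ _ ht₁₂
  refine Finset.sum_le_sum fun i _ => mul_le_mul_of_nonneg_left ?_ (sq_nonneg _)
  split_ifs with h₂ h₁ h₁ <;> norm_num
  exact h₁ (two_add_mul_pos_of_le ht₁ ht₁₂ h₂)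

theorem eventually_nhdsLT_two_add_mul_pos_iff {v t₀ : ℝ} (ht₀ : 0 ≤ t₀) :
    ∀ᶠ t in 𝓝[<] t₀, (0 < 2 + v * t ↔ 0 ≤ 2 + v * t₀) := by
  have hcont : Continuous fun t => 2 + v * t := by fun_prop
  rcases lt_trichotomy (2 + v * t₀) 0 with hneg | hzero | hpos
  · filter_upwards [nhdsWithin_le_nhds ((hcont.tendsto t₀).eventually (eventually_lt_nhds hneg))]
      with t ht
    constructor <;> intro <;> linarith
  · -- a box breaking at a time `t₀ ≥ 0` must have `v < 0`, so it is alive just before `t₀`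
    have hv : v < 0 := by nlinarith
    filter_upwards [self_mem_nhdsWithin] with t (ht : t < t₀)
    simp only [hzero, le_refl, iff_true]
    nlinarith
  · filter_upwards [nhdsWithin_le_nhds ((hcont.tendsto t₀).eventually (eventually_gt_nhds hpos))]
      with t ht
    exact iff_of_true ht hpos.le

theorem Finset.sum_mul_ite_nonneg {ι : Type*} (s : Finset ι) (w y : ι → ℝ) :
    ∑ i ∈ s, w i * (if 0 ≤ y i then (1 : ℝ) else 0)
      = ∑ i ∈ s, w i * (if 0 < y i then (1 : ℝ) else 0) + ∑ i ∈ s with y i = 0, w i := by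
  rw [Finset.sum_filter, ← Finset.sum_add_distrib]
  refine Finset.sum_congr rfl fun i _ => ?_
  rcases lt_trichotomy (y i) 0 with h | h | h
  · simp [h.not_ge, h.not_gt, h.ne]
  · simp [h]
  · simp [h, h.le, h.ne']

theorem tendsto_nhdsLT_sum_sq_mul_ite_pos {ι : Type*} (s : Finset ι) (V : ι → ℝ) {t₀ : ℝ}
    (ht₀ : 0 ≤ t₀) :
    Tendsto (fun t => ∑ i ∈ s, V i ^ 2 * if 0 < 2 + V i * t then (1 : ℝ) else 0) (𝓝[<] t₀)
      (𝓝 (∑ i ∈ s, V i ^ 2 * (if 0 < 2 + V i * t₀ then (1 : ℝ) else 0)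
        + ∑ i ∈ s with 2 + V i * t₀ = 0, V i ^ 2)) := by
  rw [← Finset.sum_mul_ite_nonneg s (fun i => V i ^ 2) (fun i => 2 + V i * t₀)]
  refine tendsto_const_nhds.congr' ?_
  filter_upwards [(Finset.eventually_all s).2 fun i _ =>
    eventually_nhdsLT_two_add_mul_pos_iff (v := V i) ht₀] with t ht
  exact Finset.sum_congr rfl fun i hi => by simp only [ht i hi]

section BoxSolution

noncomputable def boxEndpoint (a b : ℝ) (n : ℕ) (V : ℕ → ℝ) (i : ℕ) (t : ℝ) : ℝ :=
  a + (b - a) / (4 * n) * ∑ j ∈ Finset.range i,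
    (2 + V j * t) ^ 2 * if 0 < 2 + V j * t then (1 : ℝ) else 0

variable {a b : ℝ} {n : ℕ} {V : ℕ → ℝ}

local notation "X" => boxEndpoint a b n V

theorem boxEndpoint_succ_sub (i : ℕ) (t : ℝ) :
    X (i + 1) t - X i t
      = (b - a) / (4 * n) * ((2 + V i * t) ^ 2 * if 0 < 2 + V i * t then (1 : ℝ) else 0) := by
  rw [boxEndpoint, boxEndpoint, Finset.sum_range_succ]
  ring

theorem monotone_boxEndpoint (hab : a ≤ b) (t : ℝ) : Monotone (X · t) := by
  refine monotone_nat_of_le_succ fun i => sub_nonneg.1 ?_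
  rw [boxEndpoint_succ_sub]
  have hba : 0 ≤ b - a := sub_nonneg.2 hab
  positivity

theorem box_profile_eq_sum_mul_indicator (t x : ℝ) :
    ∑ i ∈ Finset.range n, (2 * V i / (2 + V i * t))
        * (if X i t < x ∧ x < X (i + 1) t ∧ 0 < 2 + V i * t then (1 : ℝ) else 0)
      = ∑ i ∈ Finset.range n,
          (2 * V i / (2 + V i * t)) * (Ioo (X i t) (X (i + 1) t)).indicator 1 x := by
  refine Finset.sum_congr rfl fun i _ => ?_
  by_cases halive : 0 < 2 + V i * t
  · simp [indicator, halive]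
  · have hcollapsed : X (i + 1) t = X i t := by
      rw [← sub_eq_zero, boxEndpoint_succ_sub, if_neg halive, mul_zero, mul_zero]
    simp [hcollapsed, halive]

theorem integral_sq_box_profile (hab : a ≤ b) (t : ℝ) :
    ∫ x : ℝ, (∑ i ∈ Finset.range n, (2 * V i / (2 + V i * t))
        * (if X i t < x ∧ x < X (i + 1) t ∧ 0 < 2 + V i * t then (1 : ℝ) else 0)) ^ 2
      = ((b - a) / n) * ∑ i ∈ Finset.range n,
          V i ^ 2 * (if 0 < 2 + V i * t then (1 : ℝ) else 0) := by
  have hmono : Monotone (X · t) := monotone_boxEndpoint hab t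
  simp_rw [box_profile_eq_sum_mul_indicator t]
  have hdisj : (Finset.range n : Set ℕ).PairwiseDisjoint fun i => Ioo (X i t) (X (i + 1) t) :=
    hmono.pairwise_disjoint_on_Ioo_succ.set_pairwise _
  rw [integral_sq_sum_mul_indicator_Ioo _ _ _ _ (fun i _ => hmono i.le_succ) hdisj,
    Finset.mul_sum]
  refine Finset.sum_congr rfl fun i _ => ?_
  rw [boxEndpoint_succ_sub]
  split_ifs with halive
  · field_simp
    ring
  · ring

end BoxSolution

theorem box_energy_dissipation_general
    (a b : ℝ) (hab : a < b) (n : ℕ) (V : ℕ → ℝ)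
    (X : ℕ → ℝ → ℝ)
    (hX : ∀ i t, X i t = a + ((b - a) / (4 * n))
      * ∑ j ∈ Finset.range i,
          (2 + V j * t)^2 * (if 0 < 2 + V j * t then (1:ℝ) else 0))
    (q : ℝ → ℝ → ℝ)
    (hq : ∀ t x, q t x = ∑ i ∈ Finset.range n,
      (2 * V i / (2 + V i * t))
        * (if X i t < x ∧ x < X (i+1) t ∧ 0 < 2 + V i * t then (1:ℝ) else 0)) :
    (∀ t : ℝ, 0 ≤ t →
      ∫ x : ℝ, (q t x)^2
        = ((b - a) / n) * ∑ i ∈ Finset.range n,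
            (V i)^2 * (if 0 < 2 + V i * t then (1:ℝ) else 0)) ∧
    (∀ t : ℝ, 0 ≤ t →
      ((b - a) / n) * ∑ i ∈ Finset.range n,
            (V i)^2 * (if 0 < 2 + V i * t then (1:ℝ) else 0)
        ≤ ((b - a) / n) * ∑ i ∈ Finset.range n, (V i)^2) ∧
    (((b - a) / n) * ∑ i ∈ Finset.range n, (V i)^2 = ∫ x : ℝ, (q 0 x)^2) ∧
    AntitoneOn (fun t => ∫ x : ℝ, (q t x)^2) (Set.Ici 0) ∧
    (∀ i < n, V i < 0 →
      Filter.Tendsto (fun t => ∫ x : ℝ, (q t x)^2)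
        (nhdsWithin (-2 / V i) (Set.Iio (-2 / V i)))
        (nhds ((∫ x : ℝ, (q (-2 / V i) x)^2)
          + ((b - a) / n)
              * ∑ j ∈ (Finset.range n).filter (fun j => 2 + V j * (-2 / V i) = 0),
                  (V j)^2))) := by
  obtain rfl : X = boxEndpoint a b n V := funext₂ hX
  have hκ : 0 ≤ (b - a) / n := div_nonneg (sub_nonneg.2 hab.le) n.cast_nonneg
  have energy : ∀ t, ∫ x : ℝ, (q t x) ^ 2
      = (b - a) / n * ∑ i ∈ Finset.range n, V i ^ 2 * if 0 < 2 + V i * t then (1 : ℝ) else 0 :=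
    fun t => by simp_rw [hq t]; exact integral_sq_box_profile hab.le t
  have antitone : AntitoneOn (fun t => ∫ x : ℝ, (q t x) ^ 2) (Ici 0) := by
    intro s hs t ht hst
    simp only [energy]
    exact mul_le_mul_of_nonneg_left (antitoneOn_sum_sq_mul_ite_pos _ V hs ht hst) hκ
  refine ⟨fun t _ => energy t, fun t ht => ?_, by simp [energy], antitone, fun i _ hVi => ?_⟩
  · simpa [energy] using antitone self_mem_Ici ht ht
  · have hbreak : 0 ≤ -2 / V i := div_nonneg_of_nonpos (by norm_num) hVi.le
    simp only [energy, ← mul_add]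
    exact (tendsto_nhdsLT_sum_sq_mul_ite_pos _ V hbreak).const_mul _

/-- Energy of the explicit dissipative solution of the deterministic
Hunter–Saxton equation with `n`-step initial data:
`∫ qⁿ(t,·)² = ((b−a)/n) Σᵢ Vᵢ² 1_{2+Vᵢt>0} ≤ ((b−a)/n) Σᵢ Vᵢ² = ∫ qⁿ(0,·)²`; the
energy is nonincreasing on `[0,∞)` and drops at each wave-breaking time `−2/Vᵢ`
(`Vᵢ < 0`) by `((b−a)/n)` times the sum of `Vⱼ²` over the boxes breaking there. -/
theorem box_energy_dissipation
    (a b : ℝ) (hab : a < b) (n : ℕ) (hn : 1 ≤ n) (V : ℕ → ℝ)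
    (X : ℕ → ℝ → ℝ)
    (hX : ∀ i t, X i t = a + ((b - a) / (4 * n))
      * ∑ j ∈ Finset.range i,
          (2 + V j * t)^2 * (if 0 < 2 + V j * t then (1:ℝ) else 0))
    (q : ℝ → ℝ → ℝ)
    (hq : ∀ t x, q t x = ∑ i ∈ Finset.range n,
      (2 * V i / (2 + V i * t))
        * (if X i t < x ∧ x < X (i+1) t ∧ 0 < 2 + V i * t then (1:ℝ) else 0)) :
    (∀ t : ℝ, 0 ≤ t →
      ∫ x : ℝ, (q t x)^2
        = ((b - a) / n) * ∑ i ∈ Finset.range n,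
            (V i)^2 * (if 0 < 2 + V i * t then (1:ℝ) else 0)) ∧
    (∀ t : ℝ, 0 ≤ t →
      ((b - a) / n) * ∑ i ∈ Finset.range n,
            (V i)^2 * (if 0 < 2 + V i * t then (1:ℝ) else 0)
        ≤ ((b - a) / n) * ∑ i ∈ Finset.range n, (V i)^2) ∧
    (((b - a) / n) * ∑ i ∈ Finset.range n, (V i)^2 = ∫ x : ℝ, (q 0 x)^2) ∧
    AntitoneOn (fun t => ∫ x : ℝ, (q t x)^2) (Set.Ici 0) ∧
    (∀ i < n, V i < 0 →
      Filter.Tendsto (fun t => ∫ x : ℝ, (q t x)^2)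
        (nhdsWithin (-2 / V i) (Set.Iio (-2 / V i)))
        (nhds ((∫ x : ℝ, (q (-2 / V i) x)^2)
          + ((b - a) / n)
              * ∑ j ∈ (Finset.range n).filter (fun j => 2 + V j * (-2 / V i) = 0),
                  (V j)^2))) :=
  box_energy_dissipation_general a b hab n V X hX q hq
end

section
/- Fix real numbers a < b, an integer n ≥ 1, and values V₁, …, Vₙ ∈ ℝ. Define Xᵢⁿ(t) = a + ((b−a)/(4n)) Σ_{j=1}^{i} (2 + V_j t)² 1_{{2 + V_j t > 0}}, qⁿ(t,x) = Σ_{i=1}^{n} (2V_i/(2 + V_i t)) 1_{{Xᵢ₋₁ⁿ(t) < x < Xᵢⁿ(t) and 2 + V_i t > 0}}, and uⁿ(t,x) = ∫_{−∞}^{x} qⁿ(t,y) dy. Then the energy of qⁿ satisfies the exact defect-measure balance: for every φ ∈ C_c^∞((0,∞) × ℝ), ∫₀^∞ ∫_ℝ ( (qⁿ)² ∂_t φ + uⁿ (qⁿ)² ∂_x φ ) dx dt = Σ_{i : V_i < 0} ((b−a)/n) V_i² · φ( −2/V_i , Xᵢⁿ(−2/V_i) ). In particular, if φ ≥ 0 then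 the left-hand side is nonnegative, i.e. ∂_t (qⁿ)² + ∂_x (uⁿ (qⁿ)²) ≤ 0 in the sense of distributions. -/
open MeasureTheory Real Set Asymptotics

lemma maxsq_hasDerivAt (x : ℝ) : HasDerivAt (fun y : ℝ => max y 0 ^ 2) (2 * max x 0) x := by
  rcases lt_trichotomy x 0 with hx | hx | hx
  · have h : (fun y : ℝ => max y 0 ^ 2) =ᶠ[nhds x] fun _ => (0:ℝ) := by
      filter_upwards [Iio_mem_nhds hx] with y hy; simp only [mem_Iio, mem_Ioi] at hy
      simp [max_eq_right (le_of_lt hy)]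
    have := (hasDerivAt_const x (0:ℝ)).congr_of_eventuallyEq h
    simpa [max_eq_right hx.le] using this
  · subst hx
    rw [hasDerivAt_iff_isLittleO]
    simp only [max_self, ne_eq, OfNat.ofNat_ne_zero, not_false_eq_true, zero_pow, sub_zero,
      mul_zero, smul_eq_mul, sub_zero]
    have h1 : (fun y : ℝ => max y 0 ^ 2) =O[nhds 0] fun y => y ^ 2 := by
      apply IsBigO.of_bound 1
      filter_upwards with y
      simp only [one_mul, norm_pow]
      gcongr
      rcases le_total y 0 with h | h
      · simp [max_eq_right h, abs_nonneg]
      · simp [max_eq_left h, le_abs_self]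
    simpa using h1.trans_isLittleO (isLittleO_pow_id (by norm_num : 1 < 2))
  · have h : (fun y : ℝ => max y 0 ^ 2) =ᶠ[nhds x] fun y => y ^ 2 := by
      filter_upwards [Ioi_mem_nhds hx] with y hy; simp only [mem_Iio, mem_Ioi] at hy
      simp [max_eq_left (le_of_lt hy)]
    have := ((hasDerivAt_pow 2 x)).congr_of_eventuallyEq h
    simpa [max_eq_left hx.le, mul_comm] using this

lemma ite_sq_max (y : ℝ) : y ^ 2 * (if 0 < y then (1:ℝ) else 0) = max y 0 ^ 2 := by
  rcases lt_trichotomy y 0 with h | h | h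
  · simp [h.not_gt, max_eq_right h.le]
  · simp [h]
  · simp [h, max_eq_left h.le]

lemma integral_box (c p r x : ℝ) :
    ∫ y in Iio x, c * (if p < y ∧ y < r then (1:ℝ) else 0) = c * max (min r x - p) 0 := by
  have h : ∀ y : ℝ, c * (if p < y ∧ y < r then (1:ℝ) else 0)
      = (Ioo p r).indicator (fun _ => c) y := by
    intro y
    simp only [Set.indicator, mem_Ioo]
    split_ifs <;> simp
  rw [MeasureTheory.integral_congr_ae (Filter.Eventually.of_forall h),
    MeasureTheory.integral_indicator measurableSet_Ioo,
    MeasureTheory.Measure.restrict_restrict measurableSet_Ioo,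
    MeasureTheory.setIntegral_const, Set.Ioo_inter_Iio, Real.volume_real_Ioo,
    smul_eq_mul, mul_comm]

/-- Exact defect-measure balance for the energy of the explicit
dissipative solution `qⁿ`: for every smooth `φ` compactly supported in `(0,∞) × ℝ`,
`∫₀^∞ ∫_ℝ ((qⁿ)² ∂ₜφ + uⁿ (qⁿ)² ∂ₓφ) dx dt
  = Σ_{i : Vᵢ < 0} ((b−a)/n) Vᵢ² φ(−2/Vᵢ, Xᵢⁿ(−2/Vᵢ))`;
in particular the left-hand side is nonnegative for `φ ≥ 0`, i.e.
`∂ₜ(qⁿ)² + ∂ₓ(uⁿ(qⁿ)²) ≤ 0` in the sense of distributions.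
(With the `0`-based indexing used here, the `i`-th box is `(Xᵢ, Xᵢ₊₁)`, so the defect
of box `i` is located at `X (i+1) (−2/V i)`.) -/
theorem box_defect_measure_balance
    (a b : ℝ) (hab : a < b) (n : ℕ) (hn : 1 ≤ n) (V : ℕ → ℝ)
    (X : ℕ → ℝ → ℝ)
    (hX : ∀ i t, X i t = a + ((b - a) / (4 * n))
      * ∑ j ∈ Finset.range i,
          (2 + V j * t)^2 * (if 0 < 2 + V j * t then (1:ℝ) else 0))
    (q : ℝ → ℝ → ℝ)
    (hq : ∀ t x, q t x = ∑ i ∈ Finset.range n,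
      (2 * V i / (2 + V i * t))
        * (if X i t < x ∧ x < X (i+1) t ∧ 0 < 2 + V i * t then (1:ℝ) else 0))
    (u : ℝ → ℝ → ℝ)
    (hu : ∀ t x, u t x = ∫ y in Set.Iio x, q t y) :
    (∀ φ : ℝ × ℝ → ℝ, ContDiff ℝ (⊤ : ℕ∞) φ → HasCompactSupport φ →
      tsupport φ ⊆ Set.Ioi (0:ℝ) ×ˢ (Set.univ : Set ℝ) →
      ∫ t in Set.Ioi (0:ℝ), ∫ x : ℝ,
        ((q t x)^2 * deriv (fun s => φ (s, x)) t
          + u t x * (q t x)^2 * deriv (fun ξ => φ (t, ξ)) x)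
        = ∑ i ∈ (Finset.range n).filter (fun i => V i < 0),
            ((b - a) / n) * (V i)^2 * φ (-2 / V i, X (i+1) (-2 / V i))) ∧
    (∀ φ : ℝ × ℝ → ℝ, ContDiff ℝ (⊤ : ℕ∞) φ → HasCompactSupport φ →
      tsupport φ ⊆ Set.Ioi (0:ℝ) ×ˢ (Set.univ : Set ℝ) →
      (∀ p, 0 ≤ φ p) →
      0 ≤ ∫ t in Set.Ioi (0:ℝ), ∫ x : ℝ,
        ((q t x)^2 * deriv (fun s => φ (s, x)) t
          + u t x * (q t x)^2 * deriv (fun ξ => φ (t, ξ)) x)) := by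
  -- basic constants
  have hn0 : (0:ℝ) < n := by exact_mod_cast hn
  set K : ℝ := (b - a) / (4 * n) with hK_def
  have hba : (0:ℝ) < b - a := sub_pos.2 hab
  have hK : 0 < K := by rw [hK_def]; positivity
  -- rewritten X
  have hX' : ∀ i t, X i t = a + K * ∑ j ∈ Finset.range i, max (2 + V j * t) 0 ^ 2 := by
    intro i t
    rw [hX i t]
    congr 1
    · congr 1
      exact Finset.sum_congr rfl fun j _ => ite_sq_max _
  -- derivatives of X
  have hXd : ∀ i t, HasDerivAt (fun t => X i t)
      (K * ∑ j ∈ Finset.range i, 2 * V j * max (2 + V j * t) 0) t := by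
    intro i t
    have h1 : ∀ j : ℕ, HasDerivAt (fun t => max (2 + V j * t) 0 ^ 2)
        (2 * V j * max (2 + V j * t) 0) t := by
      intro j
      have haff : HasDerivAt (fun t : ℝ => 2 + V j * t) (V j) t := by
        simpa using ((hasDerivAt_id t).const_mul (V j)).const_add (2:ℝ)
      have := (maxsq_hasDerivAt (2 + V j * t)).comp t haff
      refine this.congr_deriv ?_
      ring
    have hsum : HasDerivAt (fun t => ∑ j ∈ Finset.range i, max (2 + V j * t) 0 ^ 2)
        (∑ j ∈ Finset.range i, 2 * V j * max (2 + V j * t) 0) t :=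
      HasDerivAt.fun_sum fun j _ => h1 j
    have := (hsum.const_mul K).const_add a
    refine HasDerivAt.congr_of_eventuallyEq this ?_
    filter_upwards with s
    rw [hX' i s]
  -- monotonicity
  have hXle : ∀ (i k : ℕ) t, i ≤ k → X i t ≤ X k t := by
    intro i k t hik
    rw [hX' i t, hX' k t]
    have : ∑ j ∈ Finset.range i, max (2 + V j * t) 0 ^ 2
        ≤ ∑ j ∈ Finset.range k, max (2 + V j * t) 0 ^ 2 :=
      Finset.sum_le_sum_of_subset_of_nonneg (Finset.range_subset_range.2 hik)
        (fun j _ _ => by positivity)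
    nlinarith [hK]
  have hXsucc : ∀ i t, X (i+1) t = X i t + K * max (2 + V i * t) 0 ^ 2 := by
    intro i t
    rw [hX' (i+1) t, hX' i t, Finset.sum_range_succ]
    ring
  -- derivative of the single box width
  have hAd : ∀ (j : ℕ) (t : ℝ), HasDerivAt (fun t => max (2 + V j * t) 0 ^ 2)
      (2 * V j * max (2 + V j * t) 0) t := by
    intro j t
    have haff : HasDerivAt (fun t : ℝ => 2 + V j * t) (V j) t := by
      simpa using ((hasDerivAt_id t).const_mul (V j)).const_add (2:ℝ)
    have := (maxsq_hasDerivAt (2 + V j * t)).comp t haff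
    refine this.congr_deriv ?_
    ring
  set D : ℕ → ℝ → ℝ := fun j t => 2 * V j * max (2 + V j * t) 0 with hD_def
  set W : ℕ → ℝ → ℝ := fun i t => K * ∑ j ∈ Finset.range i, D j t with hW_def
  set Y : ℕ → ℝ → ℝ → ℝ := fun i s t => X i t + s * (K * max (2 + V i * t) 0 ^ 2) with hY_def
  have hXd' : ∀ i t, HasDerivAt (fun t => X i t) (W i t) t := hXd
  have hAc : ∀ j, Continuous (fun t : ℝ => max (2 + V j * t) 0 ^ 2) := by
    intro j
    exact ((continuous_const.add (continuous_const.mul continuous_id)).max continuous_const).pow 2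
  have hDc : ∀ j, Continuous (D j) := by
    intro j
    exact continuous_const.mul ((continuous_const.add (continuous_const.mul continuous_id)).max
      continuous_const)
  have hWc : ∀ i, Continuous (W i) :=
    fun i => continuous_const.mul (continuous_finset_sum _ fun j _ => hDc j)
  have hXc : ∀ i, Continuous (fun t => X i t) := by
    intro i
    have : (fun t => X i t) = fun t => a + K * ∑ j ∈ Finset.range i, max (2 + V j * t) 0 ^ 2 := by
      funext t; exact hX' i t
    rw [this]
    exact continuous_const.add (continuous_const.mul (continuous_finset_sum _ fun j _ => hAc j))
  have hYc : ∀ i, Continuous (fun p : ℝ × ℝ => Y i p.2 p.1) := by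
    intro i
    exact ((hXc i).comp continuous_fst).add
      (continuous_snd.mul ((continuous_const.mul ((hAc i).comp continuous_fst))))
  have hYd : ∀ i s t, HasDerivAt (fun t => Y i s t) (W i t + s * (K * D i t)) t := by
    intro i s t
    exact (hXd' i t).add (((hAd i t).const_mul K).const_mul s)
  -- main statement
  have main : ∀ φ : ℝ × ℝ → ℝ, ContDiff ℝ (⊤ : ℕ∞) φ → HasCompactSupport φ →
      tsupport φ ⊆ Set.Ioi (0:ℝ) ×ˢ (Set.univ : Set ℝ) →
      ∫ t in Set.Ioi (0:ℝ), ∫ x : ℝ,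
        ((q t x)^2 * deriv (fun s => φ (s, x)) t
          + u t x * (q t x)^2 * deriv (fun ξ => φ (t, ξ)) x)
        = ∑ i ∈ (Finset.range n).filter (fun i => V i < 0),
            ((b - a) / n) * (V i)^2 * φ (-2 / V i, X (i+1) (-2 / V i)) := by
    intro φ hφ hφc hφs
    have hφdiff : Differentiable ℝ φ := hφ.differentiable (by simp)
    set pd1 : ℝ × ℝ → ℝ := fun p => fderiv ℝ φ p (1, 0) with hpd1_def
    set pd2 : ℝ × ℝ → ℝ := fun p => fderiv ℝ φ p (0, 1) with hpd2_def
    have hfc : Continuous (fderiv ℝ φ) := hφ.continuous_fderiv (by simp)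
    have hpd1c : Continuous pd1 := hfc.clm_apply continuous_const
    have hpd2c : Continuous pd2 := hfc.clm_apply continuous_const
    have hd1 : ∀ t x : ℝ, deriv (fun s => φ (s, x)) t = pd1 (t, x) := by
      intro t x
      have hp : HasDerivAt (fun s : ℝ => (s, x)) ((1:ℝ), (0:ℝ)) t :=
        (hasDerivAt_id t).prodMk (hasDerivAt_const t x)
      exact (((hφdiff (t, x)).hasFDerivAt.comp_hasDerivAt t hp)).deriv
    have hd2 : ∀ t x : ℝ, deriv (fun ξ => φ (t, ξ)) x = pd2 (t, x) := by
      intro t x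
      have hp : HasDerivAt (fun ξ : ℝ => (t, ξ)) ((0:ℝ), (1:ℝ)) x :=
        (hasDerivAt_const x t).prodMk (hasDerivAt_id x)
      exact (((hφdiff (t, x)).hasFDerivAt.comp_hasDerivAt x hp)).deriv
    have hφzero : ∀ p : ℝ × ℝ, p.1 ≤ 0 → φ p = 0 := by
      intro p hp
      apply image_eq_zero_of_notMem_tsupport
      intro hmem
      have := hφs hmem
      simp only [Set.mem_prod, Set.mem_Ioi] at this
      linarith [this.1]
    -- time bound T
    obtain ⟨T, hT0, hTout⟩ : ∃ T : ℝ, 0 < T ∧ ∀ p : ℝ × ℝ, T ≤ p.1 → p ∉ tsupport φ := by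
      have hcomp : IsCompact (Prod.fst '' tsupport φ) := hφc.image continuous_fst
      obtain ⟨T₀, hT₀⟩ := hcomp.bddAbove
      refine ⟨max T₀ 0 + 1, by positivity, ?_⟩
      intro p hp hmem
      have : p.1 ≤ T₀ := hT₀ ⟨p, hmem, rfl⟩
      have : p.1 ≤ max T₀ 0 := le_trans this (le_max_left _ _)
      linarith
    have hφT : ∀ p : ℝ × ℝ, T ≤ p.1 → φ p = 0 :=
      fun p hp => image_eq_zero_of_notMem_tsupport (hTout p hp)
    have hpdT : ∀ p : ℝ × ℝ, T ≤ p.1 → pd1 p = 0 ∧ pd2 p = 0 := by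
      intro p hp
      have : fderiv ℝ φ p = 0 := by
        by_contra h
        exact hTout p hp (support_fderiv_subset ℝ (Function.mem_support.2 h))
      constructor <;> simp [hpd1_def, hpd2_def, this]
    set Φ : ℕ → ℝ → ℝ → ℝ := fun i t s =>
      pd1 (t, Y i s t) + (W i t + s * (K * D i t)) * pd2 (t, Y i s t) with hΦ_def
    have hΦc : ∀ i, Continuous (fun p : ℝ × ℝ => Φ i p.1 p.2) := by
      intro i
      have hYp : Continuous (fun p : ℝ × ℝ => (p.1, Y i p.2 p.1)) :=
        continuous_fst.prodMk (hYc i)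
      exact (hpd1c.comp hYp).add
        ((((hWc i).comp continuous_fst).add
          (continuous_snd.mul (continuous_const.mul ((hDc i).comp continuous_fst)))).mul
            (hpd2c.comp hYp))
    have hgd : ∀ i s t, HasDerivAt (fun t => φ (t, Y i s t)) (Φ i t s) t := by
      intro i s t
      have hp : HasDerivAt (fun t => (t, Y i s t)) ((1:ℝ), W i t + s * (K * D i t)) t :=
        (hasDerivAt_id t).prodMk (hYd i s t)
      have h2 := (hφdiff (t, Y i s t)).hasFDerivAt.comp_hasDerivAt t hp
      refine h2.congr_deriv ?_
      have hv : ((1:ℝ), W i t + s * (K * D i t))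
          = ((1:ℝ),(0:ℝ)) + (W i t + s * (K * D i t)) • ((0:ℝ),(1:ℝ)) := by
        simp [Prod.ext_iff]
      rw [hv, map_add, ContinuousLinearMap.map_smul, smul_eq_mul]
    have hFTC : ∀ i s τ, (0:ℝ) ≤ τ → ∫ t in (0:ℝ)..τ, Φ i t s = φ (τ, Y i s τ) := by
      intro i s τ hτ
      have h1 : ∫ t in (0:ℝ)..τ, Φ i t s = φ (τ, Y i s τ) - φ (0, Y i s 0) := by
        apply intervalIntegral.integral_eq_sub_of_hasDerivAt
        · intro t ht
          exact hgd i s t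
        · exact ((hΦc i).comp (continuous_id.prodMk continuous_const)).intervalIntegrable _ _
      rw [h1, hφzero (0, Y i s 0) (by norm_num), sub_zero]
    -- per-box time profile
    set G : ℕ → ℝ → ℝ := fun i t => (4*K*V i^2) * ∫ s in (0:ℝ)..1, Φ i t s with hG_def
    set B : ℕ → ℝ → ℝ := fun i t => if 0 < 2 + V i * t then G i t else 0 with hB_def
    have hGc : ∀ i, Continuous (G i) := fun i =>
      continuous_const.mul
        (intervalIntegral.continuous_parametric_intervalIntegral_of_continuous'
          (by exact hΦc i : Continuous (Function.uncurry (Φ i))) 0 1)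
    -- boxes are nonempty only if active
    have hbox_act : ∀ (i : ℕ) (t x : ℝ), X i t < x → x < X (i+1) t → 0 < 2 + V i * t := by
      intro i t x hx1 hx2
      by_contra hcon
      push_neg at hcon
      have hmax : max (2 + V i * t) 0 = 0 := max_eq_right hcon
      have := hXsucc i t
      rw [hmax] at this
      simp at this
      rw [this] at hx2
      linarith
    -- the inner (space) integral at each time
    have hinner : ∀ t : ℝ,
        (∫ x : ℝ, ((q t x)^2 * pd1 (t, x) + u t x * (q t x)^2 * pd2 (t, x)))
          = ∑ i ∈ Finset.range n, B i t := by
      intro t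
      set c : ℕ → ℝ := fun i => 2 * V i / (2 + V i * t) with hc_def
      set f : ℕ → ℝ → ℝ := fun i x =>
        (if X i t < x ∧ x < X (i+1) t ∧ 0 < 2 + V i * t then (1:ℝ) else 0)
          * (c i^2 * pd1 (t, x) + (W i t + c i * (x - X i t)) * c i^2 * pd2 (t, x)) with hf_def
      -- pointwise identity
      have hpoint : ∀ x : ℝ,
          (q t x)^2 * pd1 (t, x) + u t x * (q t x)^2 * pd2 (t, x)
            = ∑ i ∈ Finset.range n, f i x := by
        intro x
        by_cases hex : ∃ i, i ∈ Finset.range n ∧ X i t < x ∧ x < X (i+1) t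
        · obtain ⟨i₀, hi₀n, hx1, hx2⟩ := hex
          have hact : 0 < 2 + V i₀ * t := hbox_act i₀ t x hx1 hx2
          have hne : (2 + V i₀ * t) ≠ 0 := ne_of_gt hact
          have huniq : ∀ j ∈ Finset.range n, j ≠ i₀ → ¬(X j t < x ∧ x < X (j+1) t) := by
            intro j hj hjne hcon
            rcases lt_or_gt_of_ne hjne with hlt | hgt
            · have := hXle (j+1) i₀ t hlt
              linarith [hcon.2, hx1]
            · have := hXle (i₀+1) j t hgt
              linarith [hcon.1, hx2]
          have hqv : q t x = c i₀ := by
            rw [hq, Finset.sum_eq_single i₀]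
            · rw [if_pos ⟨hx1, hx2, hact⟩, mul_one, hc_def]
            · intro j hj hjne
              rw [if_neg, mul_zero]
              intro hcon
              exact huniq j hj hjne ⟨hcon.1, hcon.2.1⟩
            · intro hcon; exact absurd hi₀n hcon
          have huv : u t x = W i₀ t + c i₀ * (x - X i₀ t) := by
            rw [hu]
            have hqe : ∀ y : ℝ, q t y = ∑ j ∈ Finset.range n,
                (c j) * (if X j t < y ∧ y < X (j+1) t ∧ 0 < 2 + V j * t then (1:ℝ) else 0) :=
              hq t
            rw [integral_congr_ae (Filter.Eventually.of_forall fun y => hqe y),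
              integral_finset_sum]
            · have hval : ∀ j ∈ Finset.range n,
                  (∫ y in Iio x, c j
                      * (if X j t < y ∧ y < X (j+1) t ∧ 0 < 2 + V j * t then (1:ℝ) else 0))
                  = (if j < i₀ then K * D j t
                      else if j = i₀ then c i₀ * (x - X i₀ t) else 0) := by
                intro j _
                by_cases hjact : 0 < 2 + V j * t
                · have hmaxj : max (2 + V j * t) 0 = 2 + V j * t := max_eq_left hjact.le
                  have hsimp : ∀ y : ℝ,
                      (if X j t < y ∧ y < X (j+1) t ∧ 0 < 2 + V j * t then (1:ℝ) else 0)
                      = (if X j t < y ∧ y < X (j+1) t then (1:ℝ) else 0) := by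
                    intro y
                    by_cases hy : X j t < y ∧ y < X (j+1) t
                    · rw [if_pos ⟨hy.1, hy.2, hjact⟩, if_pos hy]
                    · rw [if_neg (fun hcon => hy ⟨hcon.1, hcon.2.1⟩), if_neg hy]
                  simp_rw [hsimp]
                  rw [integral_box]
                  rcases lt_trichotomy j i₀ with hlt | heq | hgt
                  · rw [if_pos hlt]
                    have h1 : X (j+1) t ≤ x := le_trans (hXle (j+1) i₀ t hlt) hx1.le
                    have h2 : X (j+1) t - X j t = K * (2 + V j * t)^2 := by
                      rw [hXsucc j t, hmaxj]; ring
                    rw [min_eq_left h1, h2, max_eq_left (by positivity), hc_def, hD_def]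
                    simp only []
                    rw [hmaxj]
                    have hnej : (2 + V j * t) ≠ 0 := ne_of_gt hjact
                    field_simp
                  · rw [if_neg (by omega), if_pos heq]
                    subst heq
                    rw [min_eq_right hx2.le, max_eq_left (by linarith)]
                  · rw [if_neg (by omega), if_neg (by omega)]
                    have h1 : x ≤ X j t := le_trans hx2.le (hXle (i₀+1) j t hgt)
                    have h2 : min (X (j+1) t) x - X j t ≤ 0 := by
                      have := min_le_right (X (j+1) t) x
                      linarith
                    rw [max_eq_right h2, mul_zero]
                · have h0 : (∫ y in Iio x, c j
                      * (if X j t < y ∧ y < X (j+1) t ∧ 0 < 2 + V j * t then (1:ℝ) else 0))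
                      = 0 := by
                    simp [hjact]
                  rw [h0]
                  have hDj : D j t = 0 := by
                    rw [hD_def]
                    simp only []
                    rw [max_eq_right (not_lt.1 hjact), mul_zero]
                  rcases lt_trichotomy j i₀ with hlt | heq | hgt
                  · rw [if_pos hlt, hDj, mul_zero]
                  · exfalso; subst heq; exact hjact hact
                  · rw [if_neg (by omega), if_neg (by omega)]
              rw [Finset.sum_congr rfl hval]
              have hn' : i₀ + 1 ≤ n := Finset.mem_range.1 hi₀n
              have hsub : ∑ j ∈ Finset.range (i₀+1),
                    (if j < i₀ then K * D j t
                      else if j = i₀ then c i₀ * (x - X i₀ t) else 0)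
                  = ∑ j ∈ Finset.range n,
                    (if j < i₀ then K * D j t
                      else if j = i₀ then c i₀ * (x - X i₀ t) else 0) := by
                apply Finset.sum_subset (Finset.range_subset_range.2 hn')
                intro j _ hjnot
                have hj' : i₀ + 1 ≤ j := by
                  by_contra hcon
                  exact hjnot (Finset.mem_range.2 (by omega))
                rw [if_neg (by omega), if_neg (by omega)]
              rw [← hsub, Finset.sum_range_succ, if_neg (lt_irrefl i₀), if_pos rfl]
              have hW : ∑ j ∈ Finset.range i₀,
                    (if j < i₀ then K * D j t
                      else if j = i₀ then c i₀ * (x - X i₀ t) else 0)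
                  = W i₀ t := by
                rw [hW_def]
                simp only []
                rw [Finset.mul_sum]
                apply Finset.sum_congr rfl
                intro j hj
                rw [if_pos (Finset.mem_range.1 hj)]
              rw [hW]
            · intro j _
              by_cases hjact : 0 < 2 + V j * t
              · have hind : (fun y => c j
                      * (if X j t < y ∧ y < X (j+1) t ∧ 0 < 2 + V j * t then (1:ℝ) else 0))
                    = (Ioo (X j t) (X (j+1) t)).indicator (fun _ => c j) := by
                  funext y
                  simp only [Set.indicator, mem_Ioo]
                  by_cases hy : X j t < y ∧ y < X (j+1) t
                  · rw [if_pos ⟨hy.1, hy.2, hjact⟩, if_pos hy, mul_one]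
                  · rw [if_neg (fun hcon => hy ⟨hcon.1, hcon.2.1⟩), if_neg hy, mul_zero]
                rw [hind]
                exact ((integrable_indicator_iff measurableSet_Ioo).2
                  (integrableOn_const measure_Ioo_lt_top.ne)).integrableOn
              · have : (fun y => c j
                      * (if X j t < y ∧ y < X (j+1) t ∧ 0 < 2 + V j * t then (1:ℝ) else 0))
                    = (fun _ => (0:ℝ)) := by
                  funext y
                  rw [if_neg (fun hcon => hjact hcon.2.2), mul_zero]
                rw [this]
                exact (integrable_zero _ _ _).integrableOn
          have hsum : ∑ i ∈ Finset.range n, f i x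
              = c i₀^2 * pd1 (t, x) + (W i₀ t + c i₀ * (x - X i₀ t)) * c i₀^2 * pd2 (t, x) := by
            rw [Finset.sum_eq_single i₀]
            · rw [hf_def]
              simp only []
              rw [if_pos ⟨hx1, hx2, hact⟩, one_mul]
            · intro j hj hjne
              rw [hf_def]
              simp only []
              rw [if_neg, zero_mul]
              intro hcon
              exact huniq j hj hjne ⟨hcon.1, hcon.2.1⟩
            · intro hcon; exact absurd hi₀n hcon
          rw [hqv, huv, hsum]
        · push_neg at hex
          have hq0 : q t x = 0 := by
            rw [hq]
            apply Finset.sum_eq_zero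
            intro i hi
            rw [if_neg, mul_zero]
            intro hcon
            exact absurd hcon.2.1 (not_lt.2 (hex i hi hcon.1))
          have hs0 : ∑ i ∈ Finset.range n, f i x = 0 := by
            apply Finset.sum_eq_zero
            intro i hi
            rw [hf_def]
            simp only []
            rw [if_neg, zero_mul]
            intro hcon
            exact absurd hcon.2.1 (not_lt.2 (hex i hi hcon.1))
          rw [hq0, hs0]
          ring
      -- integrability of each box term
      have hfint : ∀ i ∈ Finset.range n, Integrable (f i) := by
        intro i _
        by_cases hact : 0 < 2 + V i * t
        · have h1 : Continuous (fun x : ℝ => pd1 (t, x)) :=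
            hpd1c.comp (continuous_const.prodMk continuous_id)
          have h2 : Continuous (fun x : ℝ => pd2 (t, x)) :=
            hpd2c.comp (continuous_const.prodMk continuous_id)
          have hgcont : Continuous (fun x : ℝ =>
              c i^2 * pd1 (t, x) + (W i t + c i * (x - X i t)) * c i^2 * pd2 (t, x)) :=
            (continuous_const.mul h1).add
              (((continuous_const.add
                (continuous_const.mul (continuous_id.sub continuous_const))).mul
                  continuous_const).mul h2)
          have hind : f i = (Ioo (X i t) (X (i+1) t)).indicator (fun x =>
              c i^2 * pd1 (t, x) + (W i t + c i * (x - X i t)) * c i^2 * pd2 (t, x)) := by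
            funext x
            rw [hf_def]
            simp only [Set.indicator, mem_Ioo]
            by_cases hx : X i t < x ∧ x < X (i+1) t
            · rw [if_pos ⟨hx.1, hx.2, hact⟩, if_pos hx, one_mul]
            · rw [if_neg (fun hcon => hx ⟨hcon.1, hcon.2.1⟩), if_neg hx, zero_mul]
          rw [hind]
          exact (integrable_indicator_iff measurableSet_Ioo).2
            ((hgcont.integrableOn_Icc).mono_set Ioo_subset_Icc_self)
        · have : f i = (fun _ => (0:ℝ)) := by
            funext x
            rw [hf_def]
            simp only []
            rw [if_neg (fun hcon => hact hcon.2.2), zero_mul]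
          rw [this]
          exact integrable_zero _ _ _
      -- value of each box integral
      have hfval : ∀ i ∈ Finset.range n, ∫ x : ℝ, f i x = B i t := by
        intro i _
        by_cases hact : 0 < 2 + V i * t
        · set L : ℝ := K * (2 + V i * t)^2 with hL_def
          have hL : 0 < L := mul_pos hK (pow_pos hact 2)
          have hXi1 : X (i+1) t = X i t + L := by
            rw [hXsucc i t, max_eq_left hact.le]
          set g : ℝ → ℝ := fun x =>
            c i^2 * pd1 (t, x) + (W i t + c i * (x - X i t)) * c i^2 * pd2 (t, x) with hg_def
          have hind : f i = (Ioo (X i t) (X (i+1) t)).indicator g := by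
            funext x
            rw [hf_def, hg_def]
            simp only [Set.indicator, mem_Ioo]
            by_cases hx : X i t < x ∧ x < X (i+1) t
            · rw [if_pos ⟨hx.1, hx.2, hact⟩, if_pos hx, one_mul]
            · rw [if_neg (fun hcon => hx ⟨hcon.1, hcon.2.1⟩), if_neg hx, zero_mul]
          have hface : ∫ x : ℝ, f i x = ∫ x in (X i t)..(X i t + L), g x := by
            rw [hind, integral_indicator measurableSet_Ioo,
              ← integral_Ioc_eq_integral_Ioo,
              ← intervalIntegral.integral_of_le (by linarith : X i t ≤ X (i+1) t), hXi1]
          have hsub := intervalIntegral.integral_comp_mul_add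
            (a := (0:ℝ)) (b := (1:ℝ)) g (ne_of_gt hL) (X i t)
          have he1 : L * 0 + X i t = X i t := by ring
          have he2 : L * 1 + X i t = X i t + L := by ring
          rw [he1, he2] at hsub
          have hchg : ∫ x in (X i t)..(X i t + L), g x
              = L • ∫ s in (0:ℝ)..(1:ℝ), g (L * s + X i t) := by
            rw [hsub, smul_smul, mul_inv_cancel₀ (ne_of_gt hL), one_smul]
          rw [hface, hchg, hB_def]
          simp only []
          rw [if_pos hact, hG_def]
          simp only []
          rw [← intervalIntegral.integral_smul, ← intervalIntegral.integral_const_mul]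
          apply intervalIntegral.integral_congr
          intro s _
          show L • g (L * s + X i t) = 4 * K * V i ^ 2 * Φ i t s
          have hYs : L * s + X i t = Y i s t := by
            rw [hY_def]
            simp only []
            rw [max_eq_left hact.le, ← hL_def]
            ring
          have hYX : Y i s t - X i t = s * L := by
            rw [hY_def]
            simp only []
            rw [max_eq_left hact.le, ← hL_def]
            ring
          rw [smul_eq_mul, hg_def]
          simp only []
          rw [hYs, hYX, hΦ_def]
          simp only []
          rw [hc_def, hD_def]
          simp only []
          rw [max_eq_left hact.le, hL_def]
          have hnei : (2 + V i * t) ≠ 0 := ne_of_gt hact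
          field_simp
          ring
        · have hf0 : f i = (fun _ => (0:ℝ)) := by
            funext x
            rw [hf_def]
            simp only []
            rw [if_neg (fun hcon => hact hcon.2.2), zero_mul]
          rw [hf0, hB_def]
          simp only []
          rw [if_neg hact, integral_zero]
      calc (∫ x : ℝ, ((q t x)^2 * pd1 (t, x) + u t x * (q t x)^2 * pd2 (t, x)))
          = ∫ x : ℝ, ∑ i ∈ Finset.range n, f i x :=
            integral_congr_ae (Filter.Eventually.of_forall hpoint)
        _ = ∑ i ∈ Finset.range n, ∫ x : ℝ, f i x := integral_finset_sum _ hfint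
        _ = ∑ i ∈ Finset.range n, B i t := Finset.sum_congr rfl hfval
    -- outer time integration
    have hmeasact : ∀ i : ℕ, MeasurableSet {t : ℝ | 0 < 2 + V i * t} := fun i =>
      (isOpen_lt continuous_const
        (continuous_const.add (continuous_const.mul continuous_id))).measurableSet
    have hBintOn : ∀ (i : ℕ) (r1 r2 : ℝ), IntegrableOn (B i) (Ioc r1 r2) := by
      intro i r1 r2
      have hBind : B i = ({t : ℝ | 0 < 2 + V i * t}).indicator (G i) := by
        funext τ
        rw [hB_def]
        simp only [Set.indicator, mem_setOf_eq]
      rw [hBind]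
      exact (((hGc i).integrableOn_Icc).mono_set Ioc_subset_Icc_self).indicator (hmeasact i)
    have hBzeroT : ∀ (i : ℕ) (τ : ℝ), T ≤ τ → B i τ = 0 := by
      intro i τ hτ
      have hΦ0 : ∀ s ∈ uIcc (0:ℝ) 1, Φ i τ s = (0:ℝ) := by
        intro s _
        rw [hΦ_def]
        simp only []
        rw [(hpdT (τ, Y i s τ) hτ).1, (hpdT (τ, Y i s τ) hτ).2]
        ring
      have hG0 : G i τ = 0 := by
        rw [hG_def]
        simp only []
        rw [intervalIntegral.integral_congr hΦ0, intervalIntegral.integral_zero, mul_zero]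
      rw [hB_def]
      simp only []
      split_ifs <;> simp [hG0]
    -- per-box time integral evaluation
    have hswap : ∀ (i : ℕ) (τ : ℝ), 0 ≤ τ →
        ∫ t in (0:ℝ)..τ, ∫ s in (0:ℝ)..1, Φ i t s
          = ∫ s in (0:ℝ)..1, ∫ t in (0:ℝ)..τ, Φ i t s := by
      intro i τ hτ
      simp_rw [intervalIntegral.integral_of_le hτ, intervalIntegral.integral_of_le zero_le_one]
      apply MeasureTheory.integral_integral_swap
      rw [Measure.prod_restrict]
      apply MeasureTheory.IntegrableOn.mono_set
        (t := (Icc (0:ℝ) τ) ×ˢ (Icc (0:ℝ) 1)) ?_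
        (Set.prod_mono Ioc_subset_Icc_self Ioc_subset_Icc_self)
      exact ((hΦc i).continuousOn).integrableOn_compact (isCompact_Icc.prod isCompact_Icc)
    have hIoc_eval : ∀ (i : ℕ) (τ : ℝ), 0 < τ →
        ∫ t in Ioc (0:ℝ) τ, G i t = 4*K*V i^2 * ∫ s in (0:ℝ)..1, φ (τ, Y i s τ) := by
      intro i τ hτ
      rw [← intervalIntegral.integral_of_le hτ.le, hG_def]
      simp only []
      rw [intervalIntegral.integral_const_mul, hswap i τ hτ.le]
      congr 1
      apply intervalIntegral.integral_congr
      intro s _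
      exact hFTC i s τ hτ.le
    -- key per-box value
    have key : ∀ i ∈ Finset.range n, ∫ t in Ioc (0:ℝ) T, B i t
        = (if V i < 0 then ((b - a) / n) * (V i)^2 * φ (-2 / V i, X (i+1) (-2 / V i)) else 0) := by
      intro i _
      have h4K : 4 * K = (b - a) / (n:ℝ) := by
        rw [hK_def]
        field_simp
      by_cases hVi : V i < 0
      · set tb : ℝ := -2 / V i with htb_def
        have hVne : V i ≠ 0 := ne_of_lt hVi
        have htb : 0 < tb := by
          rw [htb_def, neg_div]
          have : 2 / V i < 0 := div_neg_of_pos_of_neg two_pos hVi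
          linarith
        have hVtb : 2 + V i * tb = 0 := by
          rw [htb_def]
          field_simp
          ring
        have hactiff : ∀ τ : ℝ, (0 < 2 + V i * τ) ↔ τ < tb := by
          intro τ
          rw [htb_def, lt_div_iff_of_neg hVi]
          constructor <;> intro h <;> nlinarith
        rw [if_pos hVi]
        have hmax0 : max (2 + V i * tb) 0 = 0 := by rw [hVtb, max_self]
        have hXtb : X (i+1) tb = X i tb := by rw [hXsucc i tb, hmax0]; ring_nf
        by_cases hTt : tb ≤ T
        · have hun : Ioc (0:ℝ) T = Ioc 0 tb ∪ Ioc tb T := (Ioc_union_Ioc_eq_Ioc htb.le hTt).symm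
          rw [hun, setIntegral_union (Ioc_disjoint_Ioc_of_le le_rfl) measurableSet_Ioc
            (hBintOn i 0 tb) (hBintOn i tb T)]
          have hz2 : ∫ t in Ioc tb T, B i t = 0 := by
            rw [setIntegral_congr_fun measurableSet_Ioc (g := fun _ => (0:ℝ))
              (fun τ hτ => by
                rw [hB_def]
                simp only []
                rw [if_neg (by rw [hactiff τ]; exact not_lt.2 hτ.1.le)])]
            exact integral_zero _ _
          have hz1 : ∫ t in Ioc (0:ℝ) tb, B i t = ∫ t in Ioc (0:ℝ) tb, G i t := by
            rw [integral_Ioc_eq_integral_Ioo,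
              setIntegral_congr_fun measurableSet_Ioo (g := G i)
                (fun τ hτ => by
                  rw [hB_def]
                  simp only []
                  rw [if_pos ((hactiff τ).2 hτ.2)]),
              ← integral_Ioc_eq_integral_Ioo]
          rw [hz1, hz2, add_zero, hIoc_eval i tb htb]
          have hYtb : ∀ s : ℝ, Y i s tb = X i tb := by
            intro s
            rw [hY_def]
            simp only []
            rw [hmax0]
            ring_nf
          have hcst : ∫ s in (0:ℝ)..1, φ (tb, Y i s tb) = φ (tb, X (i+1) tb) := by
            rw [intervalIntegral.integral_congr (g := fun _ => φ (tb, X (i+1) tb))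
              (fun s _ => by rw [hYtb s, hXtb]), intervalIntegral.integral_const]
            simp
          rw [hcst, ← h4K]
        · push_neg at hTt
          have hz1 : ∫ t in Ioc (0:ℝ) T, B i t = ∫ t in Ioc (0:ℝ) T, G i t :=
            setIntegral_congr_fun measurableSet_Ioc
              (fun τ hτ => by
                rw [hB_def]
                simp only []
                rw [if_pos ((hactiff τ).2 (lt_of_le_of_lt hτ.2 hTt))])
          rw [hz1, hIoc_eval i T hT0]
          have hzφ : ∫ s in (0:ℝ)..1, φ (T, Y i s T) = 0 := by
            rw [intervalIntegral.integral_congr (g := fun _ => (0:ℝ))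
              (fun s _ => hφT _ le_rfl), intervalIntegral.integral_zero]
          rw [hzφ, mul_zero, hφT (tb, X (i+1) tb) hTt.le, mul_zero]
      · rw [if_neg hVi]
        have hVnn : 0 ≤ V i := not_lt.1 hVi
        have hz1 : ∫ t in Ioc (0:ℝ) T, B i t = ∫ t in Ioc (0:ℝ) T, G i t :=
          setIntegral_congr_fun measurableSet_Ioc
            (fun τ hτ => by
              rw [hB_def]
              simp only []
              rw [if_pos (by nlinarith [hτ.1])])
        rw [hz1, hIoc_eval i T hT0]
        have hzφ : ∫ s in (0:ℝ)..1, φ (T, Y i s T) = 0 := by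
          rw [intervalIntegral.integral_congr (g := fun _ => (0:ℝ))
            (fun s _ => hφT _ le_rfl), intervalIntegral.integral_zero]
        rw [hzφ, mul_zero]
    -- assemble
    simp only [hd1, hd2]
    rw [setIntegral_congr_fun measurableSet_Ioi (fun t _ => hinner t),
      ← Ioc_union_Ioi_eq_Ioi hT0.le,
      setIntegral_union (Ioc_disjoint_Ioi le_rfl) measurableSet_Ioi
        (integrable_finset_sum _ (fun i _ => hBintOn i 0 T))
        ((integrableOn_congr_fun
            (f := fun t => ∑ i ∈ Finset.range n, B i t) (g := fun _ => (0:ℝ))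
            (fun τ hτ => Finset.sum_eq_zero (fun i _ => hBzeroT i τ (le_of_lt hτ)))
            measurableSet_Ioi).2 (integrableOn_zero))]
    have hzI : ∫ t in Ioi T, ∑ i ∈ Finset.range n, B i t = 0 := by
      rw [setIntegral_congr_fun measurableSet_Ioi (g := fun _ => (0:ℝ))
        (fun τ hτ => Finset.sum_eq_zero (fun i _ => hBzeroT i τ (le_of_lt hτ)))]
      exact integral_zero _ _
    rw [hzI, add_zero, integral_finset_sum _ (fun i _ => hBintOn i 0 T),
      Finset.sum_filter]
    exact Finset.sum_congr rfl key
  refine ⟨main, fun φ hφ hφc hφs hφnn => ?_⟩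
  rw [main φ hφ hφc hφs]
  apply Finset.sum_nonneg
  intro i _
  exact mul_nonneg (mul_nonneg (div_nonneg hba.le hn0.le) (sq_nonneg _)) (hφnn _)
end

section
/- Fix real numbers a < b, an integer n ≥ 1, and values V₁, …, Vₙ ∈ ℝ. Define the conservative characteristics X̂ᵢⁿ(t) = a + ((b−a)/(4n)) Σ_{j=1}^{i} (2 + V_j t)² (without truncation) for i = 0, …, n, the function q̂ⁿ(t,x) = Σ_{i=1}^{n} (2V_i/(2 + V_i t)) 1_{{X̂ᵢ₋₁ⁿ(t) < x < X̂ᵢⁿ(t)}} (defined for t ≥ 0 with 2 + V_i t ≠ 0 for all i), and ûⁿ(t,x) = ∫_{−∞}^{x} q̂ⁿ(t,y) dy. Then: (i) q̂ⁿ is a global weak solution, i.e. for every φ ∈ C_c^∞((0,∞) × ℝ), ∫₀^∞ ∫_ℝ ( q̂ⁿ ∂_t φ + ûⁿ q̂ⁿ ∂_x φ + (1/2)(q̂ⁿ)² φ ) dx dt = 0; and (ii) the energy is conserved: ∫_ℝ q̂ⁿ(t,x)² dx = ((b−a)/n) Σ_{i=1}^{n} V_i² for every t ≥ 0 with 2 +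 V_i t ≠ 0 for all i. -/
open MeasureTheory Real Set

/- Auxiliary lemmas -/

lemma hs_subst (f : ℝ → ℝ) (p ℓ : ℝ) (hl : 0 ≤ ℓ) :
    ∫ x in p..(p+ℓ), f x = ℓ * ∫ s in (0:ℝ)..1, f (p + s * ℓ) := by
  rcases eq_or_lt_of_le hl with h|h
  · simp [← h]
  · have h0 := intervalIntegral.integral_comp_mul_add (a := (0:ℝ)) (b := 1) f (ne_of_gt h) p
    have : ∀ s : ℝ, p + s * ℓ = ℓ * s + p := fun s => by ring
    simp only [this]
    rw [h0]
    simp only [mul_zero, zero_add, mul_one, smul_eq_mul]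
    rw [← mul_assoc, mul_inv_cancel₀ (ne_of_gt h), one_mul, add_comm ℓ p]

lemma hs_chain (φ : ℝ × ℝ → ℝ) (hφ : ContDiff ℝ (⊤ : ℕ∞) φ) {Y Y' : ℝ} {g : ℝ → ℝ} {t : ℝ}
    (hg : HasDerivAt g Y' t) (hY : g t = Y) :
    HasDerivAt (fun τ => φ (τ, g τ)) ((fderiv ℝ φ (t, Y)) (1, Y')) t := by
  have h1 : HasDerivAt (fun τ => (τ, g τ)) (1, Y') t := (hasDerivAt_id t).prodMk hg
  have h2 : HasFDerivAt φ (fderiv ℝ φ (t, g t)) (t, g t) :=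
    (hφ.differentiable (by simp) (t, g t)).hasFDerivAt
  have := h2.comp_hasDerivAt t h1
  rwa [hY] at this

lemma hs_derivt (φ : ℝ × ℝ → ℝ) (hφ : ContDiff ℝ (⊤ : ℕ∞) φ) (t x : ℝ) :
    deriv (fun s => φ (s, x)) t = (fderiv ℝ φ (t, x)) (1, 0) := by
  have : HasDerivAt (fun s => φ (s, x)) ((fderiv ℝ φ (t, x)) (1, 0)) t :=
    hs_chain φ hφ (g := fun _ => x) (hasDerivAt_const t x) rfl
  exact this.deriv

lemma hs_derivx (φ : ℝ × ℝ → ℝ) (hφ : ContDiff ℝ (⊤ : ℕ∞) φ) (t x : ℝ) :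
    deriv (fun ξ => φ (t, ξ)) x = (fderiv ℝ φ (t, x)) (0, 1) := by
  have h1 : HasDerivAt (fun ξ => (t, ξ)) ((0 : ℝ), (1:ℝ)) x :=
    (hasDerivAt_const x t).prodMk (hasDerivAt_id x)
  have h2 : HasFDerivAt φ (fderiv ℝ φ (t, x)) (t, x) :=
    (hφ.differentiable (by simp) (t, x)).hasFDerivAt
  exact (h2.comp_hasDerivAt x h1).deriv

lemma hs_split (φ : ℝ × ℝ → ℝ) (hφ : ContDiff ℝ (⊤ : ℕ∞) φ) (t x w : ℝ) :
    (fderiv ℝ φ (t, x)) (1, w)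
      = deriv (fun s => φ (s, x)) t + w * deriv (fun ξ => φ (t, ξ)) x := by
  rw [hs_derivt φ hφ, hs_derivx φ hφ]
  have : ((1 : ℝ), w) = (1, 0) + w • ((0 : ℝ), (1 : ℝ)) := by simp [Prod.ext_iff]
  rw [this, map_add, _root_.map_smul]
  simp [smul_eq_mul]

lemma hs_cont_int (g : ℝ × ℝ → ℝ) (hg : Continuous g) :
    Continuous fun t => ∫ s in (0:ℝ)..1, g (t, s) :=
  intervalIntegral.continuous_parametric_intervalIntegral_of_continuous'
    (f := fun t s => g (t, s)) (by exact hg) 0 1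

lemma hs_param (φ : ℝ × ℝ → ℝ) (hφ : ContDiff ℝ (⊤ : ℕ∞) φ)
    (Y Y' : ℝ → ℝ → ℝ)
    (hY : ∀ s t, HasDerivAt (fun τ => Y τ s) (Y' t s) t)
    (hYc : Continuous fun p : ℝ × ℝ => Y p.1 p.2)
    (hY'c : Continuous fun p : ℝ × ℝ => Y' p.1 p.2) (t₀ : ℝ) :
    HasDerivAt (fun t => ∫ s in (0:ℝ)..1, φ (t, Y t s))
      (∫ s in (0:ℝ)..1, (fderiv ℝ φ (t₀, Y t₀ s)) (1, Y' t₀ s)) t₀ := by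
  have hφc : Continuous φ := hφ.continuous
  have hfd : Continuous (fun p : ℝ × ℝ => fderiv ℝ φ p) := hφ.continuous_fderiv (by simp)
  have contF' : Continuous fun p : ℝ × ℝ =>
      (fderiv ℝ φ (p.1, Y p.1 p.2)) (1, Y' p.1 p.2) := by
    apply Continuous.clm_apply
    · exact hfd.comp (continuous_fst.prodMk hYc)
    · exact continuous_const.prodMk hY'c
  obtain ⟨M, hM⟩ := (isCompact_closedBall t₀ 1 |>.prod isCompact_Icc).exists_bound_of_continuousOn
    (s := Metric.closedBall t₀ 1 ×ˢ Icc (0:ℝ) 1) contF'.continuousOn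
  have main := intervalIntegral.hasDerivAt_integral_of_dominated_loc_of_deriv_le
    (F := fun t s => φ (t, Y t s))
    (F' := fun t s => (fderiv ℝ φ (t, Y t s)) (1, Y' t s))
    (x₀ := t₀) (a := 0) (b := 1) (μ := volume) (bound := fun _ => M)
    (s := Metric.ball t₀ 1) (Metric.ball_mem_nhds t₀ one_pos)
    (Filter.Eventually.of_forall fun x =>
      ((hφc.comp ((continuous_const.prodMk (hYc.comp
        ((continuous_const (y := x)).prodMk continuous_id))))).aestronglyMeasurable))
    (by
      apply Continuous.intervalIntegrable
      exact hφc.comp (continuous_const.prodMk (hYc.comp (continuous_const.prodMk continuous_id))))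
    ((contF'.comp (continuous_const.prodMk continuous_id)).aestronglyMeasurable)
    (Filter.Eventually.of_forall fun s hs x hx => by
      refine hM (x, s) ⟨Metric.ball_subset_closedBall hx, ?_⟩
      rw [Set.uIoc_of_le (by norm_num : (0:ℝ) ≤ 1)] at hs
      exact ⟨le_of_lt hs.1, hs.2⟩)
    intervalIntegrable_const
    (Filter.Eventually.of_forall fun s hs x hx => hs_chain φ hφ (hY s x) rfl)
  exact main.2

lemma hs_clip (cst p r x : ℝ) (hpr : p ≤ r) :
    ∫ y in Iio x, (Ioo p r).indicator (fun _ => cst) y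
      = cst * (min r (max p x) - p) := by
  rw [MeasureTheory.setIntegral_indicator measurableSet_Ioo, setIntegral_const]
  have hset : Iio x ∩ Ioo p r = Ioo p (min r x) := by
    ext y
    simp only [mem_inter_iff, mem_Iio, mem_Ioo, lt_min_iff]
    tauto
  rw [hset, measureReal_def, Real.volume_Ioo]
  rcases le_total x p with h | h
  · rw [ENNReal.ofReal_of_nonpos (by linarith [min_le_right r x])]
    rw [max_eq_left h, min_eq_right hpr]
    simp
  · rw [ENNReal.toReal_ofReal (by linarith [le_min hpr h] : 0 ≤ min r x - p)]
    rw [max_eq_right h, smul_eq_mul, mul_comm]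

/-- The conservative continuation `q̂ⁿ` with `n`-step initial data
(using the untruncated characteristics `X̂ᵢⁿ(t) = a + ((b−a)/(4n)) Σⱼ (2+Vⱼt)²`)
is a global weak solution of the deterministic Hunter–Saxton equation, and its energy
is conserved: `∫ q̂ⁿ(t,·)² = ((b−a)/n) Σᵢ Vᵢ²` for every `t ≥ 0` away from the
finitely many blow-up times. -/
theorem box_conservative_weak_solution_and_energy
    (a b : ℝ) (hab : a < b) (n : ℕ) (hn : 1 ≤ n) (V : ℕ → ℝ)
    (X : ℕ → ℝ → ℝ)
    (hX : ∀ i t, X i t = a + ((b - a) / (4 * n))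
      * ∑ j ∈ Finset.range i, (2 + V j * t)^2)
    (q : ℝ → ℝ → ℝ)
    (hq : ∀ t x, q t x = ∑ i ∈ Finset.range n,
      (2 * V i / (2 + V i * t))
        * (if X i t < x ∧ x < X (i+1) t then (1:ℝ) else 0))
    (u : ℝ → ℝ → ℝ)
    (hu : ∀ t x, u t x = ∫ y in Set.Iio x, q t y) :
    (∀ φ : ℝ × ℝ → ℝ, ContDiff ℝ (⊤ : ℕ∞) φ → HasCompactSupport φ →
      tsupport φ ⊆ Set.Ioi (0:ℝ) ×ˢ (Set.univ : Set ℝ) →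
      ∫ t in Set.Ioi (0:ℝ), ∫ x : ℝ,
        (q t x * deriv (fun s => φ (s, x)) t
          + u t x * q t x * deriv (fun ξ => φ (t, ξ)) x
          + (1/2) * (q t x)^2 * φ (t, x)) = 0) ∧
    (∀ t : ℝ, 0 ≤ t → (∀ i < n, 2 + V i * t ≠ 0) →
      ∫ x : ℝ, (q t x)^2 = ((b - a) / n) * ∑ i ∈ Finset.range n, (V i)^2) := by
  classical
  set K : ℝ := (b - a) / (4 * n) with hKdef
  have hn0 : (0:ℝ) < n := by exact_mod_cast Nat.lt_of_lt_of_le Nat.zero_lt_one hn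
  have hK0 : 0 < K := div_pos (sub_pos.2 hab) (by positivity)
  set c : ℕ → ℝ → ℝ := fun i t => 2 * V i / (2 + V i * t) with hcdef
  set L : ℕ → ℝ → ℝ := fun i t => K * (2 + V i * t)^2 with hLdef
  set W : ℕ → ℝ → ℝ := fun i t => K * (2 * V i * (2 + V i * t)) with hWdef
  set WD : ℕ → ℝ := fun i => K * (2 * V i * V i) with hWDdef
  set XD : ℕ → ℝ → ℝ := fun i t => ∑ j ∈ Finset.range i, W j t with hXDdef
  set Y : ℕ → ℝ → ℝ → ℝ := fun i t s => X i t + s * L i t with hYdef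
  set YD : ℕ → ℝ → ℝ → ℝ := fun i t s => XD i t + s * W i t with hYDdef
  have hXL : ∀ i t, X (i+1) t = X i t + L i t := by
    intro i t; rw [hX, hX, Finset.sum_range_succ]; simp only [hLdef]; ring
  have hL0 : ∀ i t, 0 ≤ L i t := fun i t => by simp only [hLdef]; positivity
  have hmono : ∀ t, Monotone fun i => X i t := by
    intro t
    apply monotone_nat_of_le_succ
    intro i
    rw [hXL]
    linarith [hL0 i t]
  have huni : ∀ t x i j, (X i t < x ∧ x < X (i+1) t) → (X j t < x ∧ x < X (j+1) t) → i = j := by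
    intro t x i j hi hj
    by_contra hne
    rcases Nat.lt_or_ge i j with h | h
    · have : X (i+1) t ≤ X j t := hmono t (Nat.succ_le_of_lt h)
      linarith [hi.2, hj.1]
    · have hj' : j < i := lt_of_le_of_ne h (Ne.symm hne)
      have : X (j+1) t ≤ X i t := hmono t (Nat.succ_le_of_lt hj')
      linarith [hj.2, hi.1]
  have hqind : ∀ t x, q t x = ∑ i ∈ Finset.range n,
      (Ioo (X i t) (X (i+1) t)).indicator (fun _ => c i t) x := by
    intro t x
    rw [hq]
    refine Finset.sum_congr rfl fun i _ => ?_
    by_cases h : X i t < x ∧ x < X (i+1) t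
    · simp [Set.indicator_apply, Set.mem_Ioo, h, hcdef]
    · simp [Set.indicator_apply, Set.mem_Ioo, h]
  have hcL : ∀ i t, c i t * L i t = W i t := by
    intro i t
    simp only [hcdef, hLdef, hWdef]
    by_cases hd : 2 + V i * t = 0
    · rw [hd]; simp
    · field_simp
  have hc2L : ∀ i t, 2 + V i * t ≠ 0 → c i t * W i t = 2 * WD i := by
    intro i t hd
    simp only [hcdef, hWdef, hWDdef]
    field_simp
  -- derivative facts
  have hLd : ∀ i t, HasDerivAt (fun τ => L i τ) (W i t) t := by
    intro i t
    have h : HasDerivAt (fun τ => 2 + V i * τ) (V i) t := by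
      simpa using ((hasDerivAt_id t).const_mul (V i)).const_add 2
    have h2 := (h.pow 2).const_mul K
    refine h2.congr_deriv ?_
    simp only [hWdef]
    ring
  have hXd : ∀ i t, HasDerivAt (fun τ => X i τ) (XD i t) t := by
    intro i t
    have hfun : (fun τ => X i τ) = fun τ => a + K * ∑ j ∈ Finset.range i, (2 + V j * τ)^2 :=
      funext fun τ => hX i τ
    rw [hfun]
    have hsum : HasDerivAt (fun τ => ∑ j ∈ Finset.range i, (2 + V j * τ)^2)
        (∑ j ∈ Finset.range i, 2 * (2 + V j * t)^1 * V j) t := by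
      apply HasDerivAt.fun_sum
      intro j _
      have h : HasDerivAt (fun τ => 2 + V j * τ) (V j) t := by
        simpa using ((hasDerivAt_id t).const_mul (V j)).const_add 2
      exact h.pow 2
    have := (hsum.const_mul K).const_add a
    refine this.congr_deriv ?_
    simp only [hXDdef, hWdef, Finset.mul_sum]
    refine Finset.sum_congr rfl fun j _ => ?_
    ring
  have hWd : ∀ i t, HasDerivAt (fun τ => W i τ) (WD i) t := by
    intro i t
    have h : HasDerivAt (fun τ => 2 + V i * τ) (V i) t := by
      simpa using ((hasDerivAt_id t).const_mul (V i)).const_add 2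
    have h2 := (h.const_mul (2 * V i)).const_mul K
    convert h2 using 1
  have hYd : ∀ i s t, HasDerivAt (fun τ => Y i τ s) (YD i t s) t := by
    intro i s t
    exact (hXd i t).add ((hLd i t).const_mul s)
  -- continuity facts
  have hXc : ∀ i, Continuous fun t => X i t := by
    intro i
    have hd : Differentiable ℝ fun t => X i t := fun t => (hXd i t).differentiableAt
    exact hd.continuous
  have hLc : ∀ i, Continuous fun t => L i t := by
    intro i
    have hd : Differentiable ℝ fun t => L i t := fun t => (hLd i t).differentiableAt
    exact hd.continuous
  have hWc : ∀ i, Continuous fun t => W i t := by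
    intro i
    have hd : Differentiable ℝ fun t => W i t := fun t => (hWd i t).differentiableAt
    exact hd.continuous
  have hYjc : ∀ i, Continuous fun p : ℝ × ℝ => Y i p.1 p.2 := by
    intro i
    simp only [hYdef]
    exact ((hXc i).comp continuous_fst).add
      (continuous_snd.mul ((hLc i).comp continuous_fst))
  have hXDc : ∀ i, Continuous fun t => XD i t := by
    intro i
    simp only [hXDdef]
    exact continuous_finset_sum _ fun j _ => hWc j
  have hYDjc : ∀ i, Continuous fun p : ℝ × ℝ => YD i p.1 p.2 := by
    intro i
    simp only [hYDdef]
    exact ((hXDc i).comp continuous_fst).add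
      (continuous_snd.mul ((hWc i).comp continuous_fst))
  -- u formula
  have huf : ∀ t x, u t x
      = ∑ j ∈ Finset.range n, c j t * (min (X (j+1) t) (max (X j t) x) - X j t) := by
    intro t x
    rw [hu]
    have h1 : ∫ y in Iio x, q t y = ∑ j ∈ Finset.range n,
        ∫ y in Iio x, (Ioo (X j t) (X (j+1) t)).indicator (fun _ => c j t) y := by
      rw [← integral_finset_sum]
      · apply setIntegral_congr_ae measurableSet_Iio
        exact Filter.Eventually.of_forall fun y _ => hqind t y
      · intro j _
        exact ((integrableOn_const measure_Ioo_lt_top.ne).integrable_indicator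
          measurableSet_Ioo).restrict
    rw [h1]
    exact Finset.sum_congr rfl fun j _ =>
      hs_clip (c j t) (X j t) (X (j+1) t) x (hmono t (Nat.le_succ j))
  -- value of u along characteristic foliation
  have huY : ∀ t i, i < n → ∀ s ∈ Set.uIcc (0:ℝ) 1, u t (Y i t s) = YD i t s := by
    intro t i hin s hs
    rw [Set.uIcc_of_le (by norm_num : (0:ℝ) ≤ 1)] at hs
    have hs0 : 0 ≤ s := hs.1
    have hs1 : s ≤ 1 := hs.2
    have hxlo : X i t ≤ Y i t s := by
      simp only [hYdef]
      nlinarith [hL0 i t]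
    have hxhi : Y i t s ≤ X (i+1) t := by
      rw [hXL]
      simp only [hYdef]
      nlinarith [hL0 i t]
    rw [huf]
    have hterm : ∀ j ∈ Finset.range n,
        c j t * (min (X (j+1) t) (max (X j t) (Y i t s)) - X j t)
          = if j < i then W j t else if j = i then s * W i t else 0 := by
      intro j hj
      rcases lt_trichotomy j i with h | h | h
      · rw [if_pos h]
        have h1 : X (j+1) t ≤ Y i t s := le_trans (hmono t (Nat.succ_le_of_lt h)) hxlo
        have h2 : X j t ≤ Y i t s := le_trans (hmono t (Nat.le_succ j)) h1
        rw [max_eq_right h2, min_eq_left h1, hXL, add_sub_cancel_left, hcL]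
      · subst h
        rw [if_neg (lt_irrefl j), if_pos rfl]
        rw [max_eq_right hxlo, min_eq_right hxhi]
        have : Y j t s - X j t = s * L j t := by simp only [hYdef]; ring
        rw [this, ← mul_assoc, mul_comm (c j t) s, mul_assoc, hcL]
      · rw [if_neg (Nat.lt_asymm h), if_neg (Nat.ne_of_gt h)]
        have h1 : Y i t s ≤ X j t := le_trans hxhi (hmono t (Nat.succ_le_of_lt h))
        rw [max_eq_left h1, min_eq_right (hmono t (Nat.le_succ j)), sub_self, mul_zero]
    rw [Finset.sum_congr rfl hterm]
    rw [← Finset.sum_subset (Finset.range_subset_range.2 (Nat.succ_le_of_lt hin))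
      (by
        intro j _ hj
        rw [Finset.mem_range, not_lt] at hj
        rw [if_neg (by omega), if_neg (by omega)])]
    rw [Finset.sum_range_succ, if_neg (lt_irrefl i), if_pos rfl]
    simp only [hYDdef, hXDdef]
    congr 1
    exact Finset.sum_congr rfl fun j hj => if_pos (Finset.mem_range.1 hj)
  constructor
  · -- weak solution
    intro φ hφ hφc hφs
    set F : ℝ → ℝ := fun t => ∫ x : ℝ,
        (q t x * deriv (fun s => φ (s, x)) t
          + u t x * q t x * deriv (fun ξ => φ (t, ξ)) x
          + (1/2) * (q t x)^2 * φ (t, x)) with hFdef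
    show ∫ t in Set.Ioi (0:ℝ), F t = 0
    set I : ℕ → ℝ → ℝ := fun i t => ∫ s in (0:ℝ)..1, φ (t, Y i t s) with hIdef
    set J : ℕ → ℝ → ℝ := fun i t =>
      ∫ s in (0:ℝ)..1, (fderiv ℝ φ (t, Y i t s)) (1, YD i t s) with hJdef
    set G : ℝ → ℝ := fun t => ∑ i ∈ Finset.range n, W i t * I i t with hGdef
    set D : ℝ → ℝ := fun t => ∑ i ∈ Finset.range n, (WD i * I i t + W i t * J i t) with hDdef
    have hGd : ∀ t, HasDerivAt G (D t) t := by
      intro t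
      apply HasDerivAt.fun_sum
      intro i _
      exact (hWd i t).mul (hs_param φ hφ (Y i) (YD i) (fun s τ => hYd i s τ)
        (hYjc i) (hYDjc i) t)
    have hfd : Continuous (fun p : ℝ × ℝ => fderiv ℝ φ p) := hφ.continuous_fderiv (by simp)
    have hDc : Continuous D := by
      apply continuous_finset_sum
      intro i _
      apply Continuous.add
      · exact continuous_const.mul (hs_cont_int (fun p => φ (p.1, Y i p.1 p.2))
          (hφ.continuous.comp (continuous_fst.prodMk (hYjc i))))
      · refine (hWc i).mul (hs_cont_int
          (fun p => (fderiv ℝ φ (p.1, Y i p.1 p.2)) (1, YD i p.1 p.2)) ?_)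
        apply Continuous.clm_apply
        · exact hfd.comp (continuous_fst.prodMk
            (continuous_fst.prodMk (hYjc i)).snd)
        · exact continuous_const.prodMk (hYDjc i)
    -- support bounds
    set Kc : Set ℝ := Prod.fst '' tsupport φ with hKcdef
    have hKcc : IsCompact Kc := hφc.image continuous_fst
    have hKcsub : Kc ⊆ Ioi 0 := by
      rintro t ⟨p, hp, rfl⟩
      exact (hφs hp).1
    have hφ0 : ∀ t, t ∉ Kc → ∀ x, φ (t, x) = 0 := by
      intro t h x
      by_contra hne
      exact h ⟨(t, x), subset_tsupport φ hne, rfl⟩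
    obtain ⟨ε, T, hε0, hεT, hKcIoo⟩ : ∃ ε T : ℝ, 0 < ε ∧ ε < T ∧ Kc ⊆ Ioo ε T := by
      rcases Kc.eq_empty_or_nonempty with h | h
      · exact ⟨1, 2, one_pos, one_lt_two, by rw [h]; exact empty_subset _⟩
      · have hbddB := hKcc.bddBelow
        have hbddA := hKcc.bddAbove
        have hminf : sInf Kc ∈ Kc := hKcc.sInf_mem h
        have hmsup : sSup Kc ∈ Kc := hKcc.sSup_mem h
        have h0 : 0 < sInf Kc := hKcsub hminf
        have hle : sInf Kc ≤ sSup Kc := csInf_le_csSup h hbddB hbddA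
        refine ⟨sInf Kc / 2, sSup Kc + 1, by linarith, by linarith, fun t htk => ?_⟩
        have h1 : sInf Kc ≤ t := csInf_le hbddB htk
        have h2 : t ≤ sSup Kc := le_csSup hbddA htk
        exact ⟨by linarith, by linarith⟩
    have hA0 : ∀ t, t ∉ Kc → ∀ x, deriv (fun s => φ (s, x)) t = 0 := by
      intro t h x
      have hnb : Kcᶜ ∈ nhds t := hKcc.isClosed.isOpen_compl.mem_nhds h
      have hev : (fun s => φ (s, x)) =ᶠ[nhds t] (fun _ => 0) := by
        filter_upwards [hnb] with s hs
        exact hφ0 s hs x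
      rw [hev.deriv_eq]
      exact deriv_const t 0
    have hFout : ∀ t, t ∉ Kc → F t = 0 := by
      intro t h
      have hzero : ∀ x : ℝ, q t x * deriv (fun s => φ (s, x)) t
          + u t x * q t x * deriv (fun ξ => φ (t, ξ)) x
          + (1/2) * (q t x)^2 * φ (t, x) = 0 := by
        intro x
        rw [hA0 t h x, hφ0 t h x,
          show (fun ξ => φ (t, ξ)) = fun _ : ℝ => (0:ℝ) from funext fun ξ => hφ0 t h ξ,
          deriv_const]
        ring
      rw [hFdef]
      simp only [hzero]
      exact integral_zero ℝ ℝ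
    -- the main pointwise-in-time identity
    have hFeq : ∀ t, (∀ i < n, 2 + V i * t ≠ 0) → F t = D t := by
      intro t ht
      set A : ℝ → ℝ := fun x => deriv (fun s => φ (s, x)) t with hAdef
      set B : ℝ → ℝ := fun x => deriv (fun ξ => φ (t, ξ)) x with hBdef
      set h : ℕ → ℝ → ℝ := fun i x =>
        c i t * A x + u t x * c i t * B x + (1/2) * (c i t)^2 * φ (t, x) with hhdef
      have hAc : Continuous A := by
        have : A = fun x => (fderiv ℝ φ (t, x)) (1, 0) :=
          funext fun x => hs_derivt φ hφ t x
        rw [this]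
        exact Continuous.clm_apply (hfd.comp (continuous_const.prodMk continuous_id))
          continuous_const
      have hBc : Continuous B := by
        have : B = fun x => (fderiv ℝ φ (t, x)) (0, 1) :=
          funext fun x => hs_derivx φ hφ t x
        rw [this]
        exact Continuous.clm_apply (hfd.comp (continuous_const.prodMk continuous_id))
          continuous_const
      have huc : Continuous fun x => u t x := by
        have : (fun x => u t x)
            = fun x => ∑ j ∈ Finset.range n, c j t * (min (X (j+1) t) (max (X j t) x) - X j t) :=
          funext fun x => huf t x
        rw [this]
        exact continuous_finset_sum _ fun j _ => continuous_const.mul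
          ((continuous_const.min (continuous_const.max continuous_id)).sub continuous_const)
      have hhc : ∀ i, Continuous (h i) := by
        intro i
        exact ((continuous_const.mul hAc).add ((huc.mul continuous_const).mul hBc)).add
          (continuous_const.mul (hφ.continuous.comp (continuous_const.prodMk continuous_id)))
      have hpt : ∀ x : ℝ, q t x * deriv (fun s => φ (s, x)) t
          + u t x * q t x * deriv (fun ξ => φ (t, ξ)) x
          + (1/2) * (q t x)^2 * φ (t, x)
          = ∑ i ∈ Finset.range n, (Ioo (X i t) (X (i+1) t)).indicator (h i) x := by
        intro x
        by_cases hex : ∃ i, i < n ∧ (X i t < x ∧ x < X (i+1) t)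
        · obtain ⟨i₀, hi₀n, hP⟩ := hex
          have hz : ∀ j ∈ Finset.range n, j ≠ i₀ → ¬(X j t < x ∧ x < X (j+1) t) :=
            fun j _ hne hPj => hne (huni t x j i₀ hPj hP)
          have h1 : q t x = c i₀ t := by
            rw [hqind, Finset.sum_eq_single_of_mem i₀ (Finset.mem_range.2 hi₀n)]
            · simp [Set.indicator_apply, Set.mem_Ioo, hP]
            · intro j hj hne
              simp [Set.indicator_apply, Set.mem_Ioo, hz j hj hne]
          rw [h1, Finset.sum_eq_single_of_mem i₀ (Finset.mem_range.2 hi₀n)]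
          · rw [Set.indicator_of_mem (Set.mem_Ioo.2 hP)]
          · intro j hj hne
            exact Set.indicator_of_notMem (fun hm => hz j hj hne (Set.mem_Ioo.1 hm)) _
        · push_neg at hex
          have h1 : q t x = 0 := by
            rw [hqind]
            apply Finset.sum_eq_zero
            intro j hj
            apply Set.indicator_of_notMem
            rw [Set.mem_Ioo]
            rintro ⟨ha1, ha2⟩
            exact absurd ha2 (not_lt.2 (hex j (Finset.mem_range.1 hj) ha1))
          rw [h1, Finset.sum_eq_zero]
          · ring
          · intro j hj
            apply Set.indicator_of_notMem
            rw [Set.mem_Ioo]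
            rintro ⟨ha1, ha2⟩
            exact absurd ha2 (not_lt.2 (hex j (Finset.mem_range.1 hj) ha1))
      calc F t = ∫ x : ℝ, ∑ i ∈ Finset.range n,
            (Ioo (X i t) (X (i+1) t)).indicator (h i) x := by
            rw [hFdef]
            exact integral_congr_ae (Filter.Eventually.of_forall hpt)
        _ = ∑ i ∈ Finset.range n, ∫ x : ℝ,
            (Ioo (X i t) (X (i+1) t)).indicator (h i) x := by
            apply integral_finset_sum
            intro i _
            exact (((hhc i).integrableOn_Icc).mono_set Set.Ioo_subset_Icc_self).integrable_indicator
              measurableSet_Ioo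
        _ = ∑ i ∈ Finset.range n, (WD i * I i t + W i t * J i t) := by
            refine Finset.sum_congr rfl fun i hi => ?_
            have hin := Finset.mem_range.1 hi
            rw [integral_indicator measurableSet_Ioo]
            rw [← MeasureTheory.integral_Ioc_eq_integral_Ioo,
              ← intervalIntegral.integral_of_le
                (hmono t (Nat.le_succ i) : X i t ≤ X (i+1) t)]
            show ∫ x in X i t..X (i+1) t, h i x = WD i * I i t + W i t * J i t
            rw [hXL i t, hs_subst (h i) (X i t) (L i t) (hL0 i t)]
            calc L i t * ∫ s in (0:ℝ)..1, h i (X i t + s * L i t)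
                = ∫ s in (0:ℝ)..1,
                    (WD i * φ (t, Y i t s)
                      + W i t * ((fderiv ℝ φ (t, Y i t s)) (1, YD i t s))) := by
                  rw [← intervalIntegral.integral_const_mul]
                  apply intervalIntegral.integral_congr
                  intro s hs
                  show L i t * h i (X i t + s * L i t)
                      = WD i * φ (t, Y i t s)
                        + W i t * ((fderiv ℝ φ (t, Y i t s)) (1, YD i t s))
                  have hYeq : X i t + s * L i t = Y i t s := by simp only [hYdef]
                  rw [hYeq]
                  rw [hs_split φ hφ t (Y i t s) (YD i t s)]
                  simp only [hhdef]
                  rw [huY t i hin s hs]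
                  have w1 := hcL i t
                  have w2 := hc2L i t (ht i hin)
                  set Av := deriv (fun s_1 => φ (s_1, Y i t s)) t
                  set Bv := deriv (fun ξ => φ (t, ξ)) (Y i t s)
                  set Cv := φ (t, Y i t s)
                  linear_combination (Av + YD i t s * Bv + (1/2) * c i t * Cv) * w1
                    + (1/2) * Cv * w2
              _ = WD i * I i t + W i t * J i t := by
                  rw [intervalIntegral.integral_add, intervalIntegral.integral_const_mul,
                    intervalIntegral.integral_const_mul]
                  · exact (Continuous.intervalIntegrable (by
                      exact continuous_const.mul (hφ.continuous.comp
                        (continuous_const.prodMk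
                          ((hYjc i).comp (continuous_const.prodMk continuous_id)))))) 0 1
                  · apply Continuous.intervalIntegrable
                    apply continuous_const.mul
                    apply Continuous.clm_apply
                    · exact hfd.comp (continuous_const.prodMk
                        ((hYjc i).comp (continuous_const.prodMk continuous_id)))
                    · exact continuous_const.prodMk
                        ((hYDjc i).comp (continuous_const.prodMk continuous_id))
        _ = D t := rfl
    -- the a.e. goodness of times
    have hae : ∀ᵐ t : ℝ, ∀ i < n, 2 + V i * t ≠ 0 := by
      rw [MeasureTheory.ae_all_iff]
      intro i
      by_cases hV : V i = 0
      · exact Filter.Eventually.of_forall fun t _ => by rw [hV]; norm_num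
      · rw [MeasureTheory.ae_iff]
        refine measure_mono_null (fun t htm => ?_) (measure_singleton (-2 / V i))
        simp only [Set.mem_setOf_eq, Classical.not_imp, not_not] at htm
        obtain ⟨_, h2⟩ := htm
        have hvt : V i * t = -2 := by linarith
        rw [Set.mem_singleton_iff]
        field_simp
        linarith
    -- assembly
    have hIccIoi : Icc ε T ⊆ Ioi (0:ℝ) := fun t htm => lt_of_lt_of_le hε0 htm.1
    have hfind : ∀ t, F t = (Icc ε T).indicator F t := by
      intro t
      by_cases hmem : t ∈ Icc ε T
      · rw [Set.indicator_of_mem hmem]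
      · rw [Set.indicator_of_notMem hmem]
        exact hFout t fun hK => hmem (Set.Ioo_subset_Icc_self (hKcIoo hK))
    have hGz : ∀ t, t ∉ Kc → G t = 0 := by
      intro t htn
      rw [hGdef]
      apply Finset.sum_eq_zero
      intro i _
      have : I i t = 0 := by
        show (∫ s in (0:ℝ)..1, φ (t, Y i t s)) = 0
        rw [intervalIntegral.integral_congr (g := fun _ => (0:ℝ))
          (fun s _ => hφ0 t htn (Y i t s))]
        simp
      rw [this, mul_zero]
    calc ∫ t in Set.Ioi (0:ℝ), F t
        = ∫ t in Set.Ioi (0:ℝ), (Icc ε T).indicator F t :=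
          setIntegral_congr_ae measurableSet_Ioi
            (Filter.Eventually.of_forall fun t _ => hfind t)
      _ = ∫ t in Set.Ioi (0:ℝ) ∩ Icc ε T, F t := setIntegral_indicator measurableSet_Icc
      _ = ∫ t in Icc ε T, F t := by rw [Set.inter_eq_right.2 hIccIoi]
      _ = ∫ t in Icc ε T, D t := by
          apply setIntegral_congr_ae measurableSet_Icc
          filter_upwards [hae] with t htt _
          exact hFeq t htt
      _ = ∫ t in ε..T, D t := by
          rw [intervalIntegral.integral_of_le hεT.le, integral_Icc_eq_integral_Ioc]
      _ = G T - G ε := intervalIntegral.integral_eq_sub_of_hasDerivAt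
          (fun t _ => hGd t) (hDc.intervalIntegrable ε T)
      _ = 0 := by
          rw [hGz T (fun hK => (hKcIoo hK).2.ne rfl),
            hGz ε (fun hK => (hKcIoo hK).1.ne' rfl)]
          ring
  · -- energy conservation
    intro t ht0 ht
    have hsq : ∀ x, (q t x)^2 = ∑ i ∈ Finset.range n,
        (Ioo (X i t) (X (i+1) t)).indicator (fun _ => (c i t)^2) x := by
      intro x
      by_cases hex : ∃ i, i < n ∧ (X i t < x ∧ x < X (i+1) t)
      · obtain ⟨i₀, hi₀n, hP⟩ := hex
        have hz : ∀ j ∈ Finset.range n, j ≠ i₀ → ¬(X j t < x ∧ x < X (j+1) t) :=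
          fun j _ hne hPj => hne (huni t x j i₀ hPj hP)
        have h1 : q t x = c i₀ t := by
          rw [hqind, Finset.sum_eq_single_of_mem i₀ (Finset.mem_range.2 hi₀n)]
          · simp [Set.indicator_apply, Set.mem_Ioo, hP]
          · intro j hj hne
            simp [Set.indicator_apply, Set.mem_Ioo, hz j hj hne]
        rw [h1, Finset.sum_eq_single_of_mem i₀ (Finset.mem_range.2 hi₀n)]
        · simp [Set.indicator_apply, Set.mem_Ioo, hP]
        · intro j hj hne
          simp [Set.indicator_apply, Set.mem_Ioo, hz j hj hne]
      · push_neg at hex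
        have h1 : q t x = 0 := by
          rw [hqind]
          apply Finset.sum_eq_zero
          intro j hj
          simp only [Set.indicator_apply, Set.mem_Ioo]
          rw [if_neg]
          rintro ⟨h1, h2⟩
          exact absurd h2 (not_lt.2 (hex j (Finset.mem_range.1 hj) h1))
        rw [h1, Finset.sum_eq_zero]
        · ring
        · intro j hj
          simp only [Set.indicator_apply, Set.mem_Ioo]
          rw [if_neg]
          rintro ⟨h1, h2⟩
          exact absurd h2 (not_lt.2 (hex j (Finset.mem_range.1 hj) h1))
    calc ∫ x : ℝ, (q t x)^2
        = ∫ x : ℝ, ∑ i ∈ Finset.range n,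
            (Ioo (X i t) (X (i+1) t)).indicator (fun _ => (c i t)^2) x := by
          exact integral_congr_ae (Filter.Eventually.of_forall hsq)
      _ = ∑ i ∈ Finset.range n, ∫ x : ℝ,
            (Ioo (X i t) (X (i+1) t)).indicator (fun _ => (c i t)^2) x := by
          apply integral_finset_sum
          intro i _
          exact (integrableOn_const measure_Ioo_lt_top.ne).integrable_indicator
            measurableSet_Ioo
      _ = ∑ i ∈ Finset.range n, (c i t)^2 * L i t := by
          refine Finset.sum_congr rfl fun i _ => ?_
          rw [integral_indicator measurableSet_Ioo, setIntegral_const]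
          rw [measureReal_def, Real.volume_Ioo, hXL]
          simp only [add_sub_cancel_left]
          rw [ENNReal.toReal_ofReal (hL0 i t), smul_eq_mul]
          ring
      _ = ((b - a) / n) * ∑ i ∈ Finset.range n, (V i)^2 := by
          rw [Finset.mul_sum]
          refine Finset.sum_congr rfl fun i hi => ?_
          have hd := ht i (Finset.mem_range.1 hi)
          have hne : (n:ℝ) ≠ 0 := ne_of_gt hn0
          have h1 : c i t ^ 2 * L i t = 4 * K * V i ^ 2 := by
            simp only [hcdef, hLdef]
            field_simp
            ring
          rw [h1, hKdef]
          field_simp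
end
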